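/- There exists a countably infinite simple ∧-matroid M_* of rank 3 such that: (universality) every finite simple ∧-matroid of rank ≤ 3 embeds into M_*; and (homogeneity) every isomorphism between finite substructures of M_* extends to an automorphism of M_*. -/
import Mathlib


namespace PaoliniMatroids

open Function Set

/-- The "line" through `a` and `b` determined by a ternary collinearity relation `R`:
the set `{a, b} ∪ {x | R a b x}`. -/
def lineOf {V : Type*} (R : V → V → V → Prop) (a b : V) : Set V :=
  {a, b} ∪ {x | R a b x}

/-- A simple ∧-matroid of rank ≤ 3, with domain `carrier` inside the ambient type `V`.
`R` is the ternary dependency (collinearity) relation and `wedge` is the 4-ary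
intersection-of-lines function determined by `R`. -/
structure WM (V : Type*) where
  carrier : Set V
  R : V → V → V → Prop
  wedge : V → V → V → V → V
  R_mem : ∀ a b c, R a b c → a ∈ carrier ∧ b ∈ carrier ∧ c ∈ carrier
  wedge_mem : ∀ a b c d, a ∈ carrier → b ∈ carrier → c ∈ carrier → d ∈ carrier →
      wedge a b c d ∈ carrier
  irrefl : ∀ a b c, R a b c → a ≠ b ∧ a ≠ c ∧ b ≠ c
  symm_swap : ∀ a b c, R a b c → R b a c
  symm_rot : ∀ a b c, R a b c → R b c a
  exchange : ∀ a b c d, R a b c → R a b d → ∀ x y z,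
      x ∈ ({a, b, c, d} : Set V) → y ∈ ({a, b, c, d} : Set V) → z ∈ ({a, b, c, d} : Set V) →
      x ≠ y → x ≠ z → y ≠ z → R x y z
  wedge_det : ∀ a b c d, a ∈ carrier → b ∈ carrier → c ∈ carrier → d ∈ carrier →
      (a ≠ b ∧ c ≠ d ∧ lineOf R a b ≠ lineOf R c d ∧
        wedge a b c d ∈ lineOf R a b ∧ wedge a b c d ∈ lineOf R c d ∧
        wedge a b c d ∉ ({a, b, c, d} : Set V)) ∨
      (wedge a b c d = a ∧ ¬ ∃ p, a ≠ b ∧ c ≠ d ∧ lineOf R a b ≠ lineOf R c d ∧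
        p ∈ lineOf R a b ∧ p ∈ lineOf R c d ∧ p ∉ ({a, b, c, d} : Set V))

/-- An embedding of ∧-matroids: an injective map (on the domain) preserving `R`
in both directions and preserving the ∧-function. -/
structure IsEmb {V W : Type*} (M : WM V) (N : WM W) (f : V → W) : Prop where
  maps : ∀ x ∈ M.carrier, f x ∈ N.carrier
  inj : ∀ x ∈ M.carrier, ∀ y ∈ M.carrier, f x = f y → x = y
  rel : ∀ a ∈ M.carrier, ∀ b ∈ M.carrier, ∀ c ∈ M.carrier,
      (M.R a b c ↔ N.R (f a) (f b) (f c))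
  wedge : ∀ a ∈ M.carrier, ∀ b ∈ M.carrier, ∀ c ∈ M.carrier, ∀ d ∈ M.carrier,
      f (M.wedge a b c d) = N.wedge (f a) (f b) (f c) (f d)

/-- An isomorphism of ∧-matroids: an embedding which is onto the target domain. -/
def IsIso {V W : Type*} (M : WM V) (N : WM W) (f : V → W) : Prop :=
  IsEmb M N f ∧ N.carrier ⊆ f '' M.carrier

/-- `M` is a substructure of `N`: the domain of `M` is a subset of that of `N`
(necessarily closed under the ∧-function of `N`) and `R`, `∧` are induced. -/
structure Sub {V : Type*} (M N : WM V) : Prop where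
  sub : M.carrier ⊆ N.carrier
  rel : ∀ a ∈ M.carrier, ∀ b ∈ M.carrier, ∀ c ∈ M.carrier, (M.R a b c ↔ N.R a b c)
  wedge : ∀ a ∈ M.carrier, ∀ b ∈ M.carrier, ∀ c ∈ M.carrier, ∀ d ∈ M.carrier,
      M.wedge a b c d = N.wedge a b c d

/-- The matroid has rank 3: there are three (pairwise distinct) non-collinear points. -/
def Rank3 {V : Type*} (M : WM V) : Prop :=
  ∃ a ∈ M.carrier, ∃ b ∈ M.carrier, ∃ c ∈ M.carrier,
    a ≠ b ∧ a ≠ c ∧ b ≠ c ∧ ¬ M.R a b c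

/-- An automorphism of a ∧-matroid: a bijection of the domain preserving `R` in both
directions and preserving the ∧-function. -/
def IsAut {V : Type*} (M : WM V) (g : V → V) : Prop :=
  Set.BijOn g M.carrier M.carrier ∧
  (∀ a ∈ M.carrier, ∀ b ∈ M.carrier, ∀ c ∈ M.carrier,
      (M.R a b c ↔ M.R (g a) (g b) (g c))) ∧
  (∀ a ∈ M.carrier, ∀ b ∈ M.carrier, ∀ c ∈ M.carrier, ∀ d ∈ M.carrier,
      g (M.wedge a b c d) = M.wedge (g a) (g b) (g c) (g d))

/-- A projective plane: a point-line incidence system where two distinct points lie on a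
unique common line, two distinct lines meet in a unique point, and there are four points
no three of which are collinear. -/
structure ProjPlane where
  Point : Type
  Line : Type
  incid : Point → Line → Prop
  unique_line : ∀ p q : Point, p ≠ q → ∃! l : Line, incid p l ∧ incid q l
  unique_point : ∀ l m : Line, l ≠ m → ∃! p : Point, incid p l ∧ incid p m
  nondeg : ∃ p₁ p₂ p₃ p₄ : Point, p₁ ≠ p₂ ∧ p₁ ≠ p₃ ∧ p₁ ≠ p₄ ∧ p₂ ≠ p₃ ∧ p₂ ≠ p₄ ∧ p₃ ≠ p₄ ∧
    ∀ l : Line, ¬(incid p₁ l ∧ incid p₂ l ∧ incid p₃ l) ∧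
      ¬(incid p₁ l ∧ incid p₂ l ∧ incid p₄ l) ∧
      ¬(incid p₁ l ∧ incid p₃ l ∧ incid p₄ l) ∧
      ¬(incid p₂ l ∧ incid p₃ l ∧ incid p₄ l)

/-- The ternary relation of the simple rank-3 matroid `M_P` associated with a projective
plane: `R a b c` iff `a, b, c` are pairwise distinct collinear points. -/
def ProjPlane.Rmat (P : ProjPlane) (a b c : P.Point) : Prop :=
  a ≠ b ∧ a ≠ c ∧ b ≠ c ∧ ∃ l : P.Line, P.incid a l ∧ P.incid b l ∧ P.incid c l

/-- `N` omits the matroid `M_P` of the projective plane `P`: no subset of the domain of `N`,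
with the induced ternary relation, is isomorphic (as a matroid) to `M_P`. -/
def Omits {V : Type*} (N : WM V) (P : ProjPlane) : Prop :=
  ¬ ∃ e : P.Point → V, Function.Injective e ∧ (∀ p, e p ∈ N.carrier) ∧
      ∀ a b c, P.Rmat a b c ↔ N.R (e a) (e b) (e c)

section Abstract
variable {V : Type*} (R : V → V → V → Prop)

/-- Bundle of the relational axioms. -/
structure RAx : Prop where
  irrefl : ∀ a b c, R a b c → a ≠ b ∧ a ≠ c ∧ b ≠ c
  symm_swap : ∀ a b c, R a b c → R b a c
  symm_rot : ∀ a b c, R a b c → R b c a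
  exchange : ∀ a b c d, R a b c → R a b d → ∀ x y z,
      x ∈ ({a, b, c, d} : Set V) → y ∈ ({a, b, c, d} : Set V) → z ∈ ({a, b, c, d} : Set V) →
      x ≠ y → x ≠ z → y ≠ z → R x y z

variable {R}

lemma RAx.symm231 (h : RAx R) {a b c : V} (H : R a b c) : R b c a := h.symm_rot _ _ _ H
lemma RAx.symm213 (h : RAx R) {a b c : V} (H : R a b c) : R b a c := h.symm_swap _ _ _ H
lemma RAx.symm132 (h : RAx R) {a b c : V} (H : R a b c) : R a c b :=
  h.symm231 (h.symm213 H)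
lemma RAx.symm312 (h : RAx R) {a b c : V} (H : R a b c) : R c a b :=
  h.symm231 (h.symm231 H)
lemma RAx.symm321 (h : RAx R) {a b c : V} (H : R a b c) : R c b a :=
  h.symm213 (h.symm231 H)

lemma mem_lineOf_iff {a b x : V} : x ∈ lineOf R a b ↔ x = a ∨ x = b ∨ R a b x := by
  simp [lineOf, Set.mem_insert_iff, or_assoc]

lemma mem_lineOf_left {a b : V} : a ∈ lineOf R a b := Or.inl (Or.inl rfl)
lemma mem_lineOf_right {a b : V} : b ∈ lineOf R a b := Or.inl (Or.inr rfl)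
lemma mem_lineOf_of_rel {a b x : V} (h : R a b x) : x ∈ lineOf R a b := Or.inr h

lemma lineOf_symm (h : RAx R) (a b : V) : lineOf R a b = lineOf R b a := by
  ext x
  rw [mem_lineOf_iff, mem_lineOf_iff]
  constructor
  · rintro (rfl | rfl | hx)
    exacts [Or.inr (Or.inl rfl), Or.inl rfl, Or.inr (Or.inr (h.symm213 hx))]
  · rintro (rfl | rfl | hx)
    exacts [Or.inr (Or.inl rfl), Or.inl rfl, Or.inr (Or.inr (h.symm213 hx))]

/-- L0: the line through `a` and a third point of `lineOf a b` equals `lineOf a b`. -/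
lemma lineOf_eq_of_rel (h : RAx R) {a b d : V} (hd : R a b d) :
    lineOf R a d = lineOf R a b := by
  obtain ⟨hab, had, hbd⟩ := h.irrefl _ _ _ hd
  ext x
  rw [mem_lineOf_iff, mem_lineOf_iff]
  constructor
  · rintro (rfl | rfl | hx)
    · exact Or.inl rfl
    · exact Or.inr (Or.inr hd)
    · have hadb : R a d b := h.symm132 hd
      obtain ⟨had', hax, hdx⟩ := h.irrefl _ _ _ hx
      rcases eq_or_ne x b with rfl | hxb
      · exact Or.inr (Or.inl rfl)
      · refine Or.inr (Or.inr (h.exchange a d x b hx hadb a b x ?_ ?_ ?_ hab hax ?_))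
        · simp
        · simp
        · simp
        · exact fun e => hxb e.symm
  · rintro (rfl | rfl | hx)
    · exact Or.inl rfl
    · exact Or.inr (Or.inr (h.symm132 hd))
    · obtain ⟨hab', hax, hbx⟩ := h.irrefl _ _ _ hx
      rcases eq_or_ne x d with rfl | hxd
      · exact Or.inr (Or.inl rfl)
      · refine Or.inr (Or.inr (h.exchange a b x d hx hd a d x ?_ ?_ ?_ had hax ?_))
        · simp
        · simp
        · simp
        · exact hxd.symm

/-- step: the line through `a` and another of its points equals the line. -/
lemma lineOf_step (h : RAx R) {a b c : V} (hc : c ∈ lineOf R a b) (hca : c ≠ a) :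
    lineOf R a c = lineOf R a b := by
  rw [mem_lineOf_iff] at hc
  rcases hc with rfl | rfl | hc
  · exact absurd rfl hca
  · rfl
  · exact lineOf_eq_of_rel h hc

/-- L1: a line is determined by any two of its points. -/
lemma lineOf_eq_of_mem (h : RAx R) {a b c d : V} (hab : a ≠ b) (hcd : c ≠ d)
    (hc : c ∈ lineOf R a b) (hd : d ∈ lineOf R a b) : lineOf R c d = lineOf R a b := by
  rcases eq_or_ne c a with rfl | hca
  · exact lineOf_step h hd hcd.symm
  · have h1 : lineOf R a c = lineOf R a b := lineOf_step h hc hca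
    have hd' : d ∈ lineOf R c a := by
      rw [← lineOf_symm h, h1]; exact hd
    have h2 : lineOf R c d = lineOf R c a := lineOf_step h hd' hcd.symm
    rw [h2, ← lineOf_symm h, h1]

/-- L2: three distinct points of a line are related. -/
lemma rel_of_mem_lineOf (h : RAx R) {a b x y z : V} (hab : a ≠ b)
    (hx : x ∈ lineOf R a b) (hy : y ∈ lineOf R a b) (hz : z ∈ lineOf R a b)
    (hxy : x ≠ y) (hxz : x ≠ z) (hyz : y ≠ z) : R x y z := by
  have := lineOf_eq_of_mem h hab hxy hx hy
  have hz' : z ∈ lineOf R x y := this.symm ▸ hz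
  rw [mem_lineOf_iff] at hz'
  rcases hz' with rfl | rfl | hz'
  · exact absurd rfl hxz
  · exact absurd rfl hyz
  · exact hz'

/-- U: two lines sharing two distinct points are equal. -/
lemma lineOf_eq_of_two_mem (h : RAx R) {a b c d p q : V} (hab : a ≠ b) (hcd : c ≠ d)
    (hpq : p ≠ q) (hp1 : p ∈ lineOf R a b) (hq1 : q ∈ lineOf R a b)
    (hp2 : p ∈ lineOf R c d) (hq2 : q ∈ lineOf R c d) :
    lineOf R a b = lineOf R c d := by
  rw [← lineOf_eq_of_mem h hab hpq hp1 hq1, ← lineOf_eq_of_mem h hcd hpq hp2 hq2]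

end Abstract
/-! ### Finite partial linear spaces over `ℕ` -/

structure PLS where
  pts : Finset ℕ
  lines : Finset (Finset ℕ)

instance : Countable PLS := by
  have : Function.Injective (fun P : PLS => (P.pts, P.lines)) := by
    rintro ⟨a, b⟩ ⟨c, d⟩ h
    simpa using h
  exact Function.Injective.countable this

/-- Two finsets share at least two points. -/
def Meet2 (ℓ k : Finset ℕ) : Prop := ∃ x y, x ≠ y ∧ x ∈ ℓ ∧ x ∈ k ∧ y ∈ ℓ ∧ y ∈ k

def Good (P : PLS) : Prop :=
  (∀ ℓ ∈ P.lines, ℓ ⊆ P.pts) ∧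
  (∀ ℓ ∈ P.lines, ∃ x ∈ ℓ, ∃ y ∈ ℓ, ∃ z ∈ ℓ, x ≠ y ∧ x ≠ z ∧ y ≠ z) ∧
  (∀ ℓ₁ ∈ P.lines, ∀ ℓ₂ ∈ P.lines, ℓ₁ ≠ ℓ₂ →
    ∀ x y, x ∈ ℓ₁ → x ∈ ℓ₂ → y ∈ ℓ₁ → y ∈ ℓ₂ → x = y)

/-- The collinearity relation of a `PLS`. -/
def Rel (P : PLS) (x y z : ℕ) : Prop :=
  x ≠ y ∧ x ≠ z ∧ y ≠ z ∧ ∃ ℓ ∈ P.lines, x ∈ ℓ ∧ y ∈ ℓ ∧ z ∈ ℓ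

lemma Rel_mem (hP : Good P) (h : Rel P x y z) : x ∈ P.pts ∧ y ∈ P.pts ∧ z ∈ P.pts := by
  obtain ⟨-, -, -, ℓ, hℓ, hx, hy, hz⟩ := h
  exact ⟨hP.1 ℓ hℓ hx, hP.1 ℓ hℓ hy, hP.1 ℓ hℓ hz⟩

/-- Uniqueness of the line through two distinct points. -/
lemma line_unique (hP : Good P) {ℓ₁ ℓ₂ : Finset ℕ} (h₁ : ℓ₁ ∈ P.lines) (h₂ : ℓ₂ ∈ P.lines)
    (h : Meet2 ℓ₁ ℓ₂) : ℓ₁ = ℓ₂ := by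
  by_contra hne
  obtain ⟨x, y, hxy, hx1, hx2, hy1, hy2⟩ := h
  exact hxy (hP.2.2 ℓ₁ h₁ ℓ₂ h₂ hne x y hx1 hx2 hy1 hy2)

/-- `Rel` of a `PLS` satisfies the relational axioms. -/
lemma relAx (hP : Good P) : RAx (Rel P) := by
  constructor
  · rintro a b c ⟨h1, h2, h3, -⟩; exact ⟨h1, h2, h3⟩
  · rintro a b c ⟨h1, h2, h3, ℓ, hℓ, ha, hb, hc⟩
    exact ⟨h1.symm, h3, h2, ℓ, hℓ, hb, ha, hc⟩
  · rintro a b c ⟨h1, h2, h3, ℓ, hℓ, ha, hb, hc⟩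
    exact ⟨h3, h1.symm, h2.symm, ℓ, hℓ, hb, hc, ha⟩
  · rintro a b c d ⟨h1, h2, h3, ℓ, hℓ, ha, hb, hc⟩ ⟨-, -, h3', ℓ', hℓ', ha', hb', hd⟩
    have : ℓ = ℓ' := line_unique hP hℓ hℓ' ⟨a, b, h1, ha, ha', hb, hb'⟩
    subst this
    intro x y z hx hy hz hxy hxz hyz
    have mem : ∀ w, w ∈ ({a, b, c, d} : Set ℕ) → w ∈ ℓ := by
      rintro w (rfl | rfl | rfl | rfl) <;> assumption
    exact ⟨hxy, hxz, hyz, ℓ, hℓ, mem x hx, mem y hy, mem z hz⟩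

/-- Closedness of a point set in a `PLS`. -/
def Cl (P : PLS) (A : Finset ℕ) : Prop :=
  ∀ ℓ₁ ∈ P.lines, ∀ ℓ₂ ∈ P.lines, ℓ₁ ≠ ℓ₂ → Meet2 ℓ₁ A → Meet2 ℓ₂ A →
    ∀ p, p ∈ ℓ₁ → p ∈ ℓ₂ → p ∈ A

/-! ### Amalgamation -/

/-- Hypotheses for amalgamating `Q` onto `P` over `A := Q.pts ∩ P.pts`. -/
structure Fit (P Q : PLS) : Prop where
  goodP : Good P
  goodQ : Good Q
  clP : Cl P (Q.pts ∩ P.pts)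
  clQ : Cl Q (Q.pts ∩ P.pts)
  agree : ∀ x y z, x ∈ Q.pts ∩ P.pts → y ∈ Q.pts ∩ P.pts → z ∈ Q.pts ∩ P.pts →
    (Rel P x y z ↔ Rel Q x y z)

open Classical in
noncomputable def amalg (P Q : PLS) : PLS where
  pts := P.pts ∪ Q.pts
  lines := (P.lines.filter fun ℓ => ∀ k ∈ Q.lines, ¬ Meet2 ℓ k)
    ∪ (Q.lines.filter fun k => ∀ ℓ ∈ P.lines, ¬ Meet2 ℓ k)
    ∪ ((P.lines ×ˢ Q.lines).filter fun z => Meet2 z.1 z.2).image fun z => z.1 ∪ z.2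

lemma amalg_pts (P Q : PLS) : (amalg P Q).pts = P.pts ∪ Q.pts := rfl

lemma amalg_lines_cases {P Q : PLS} {m : Finset ℕ} (h : m ∈ (amalg P Q).lines) :
    (m ∈ P.lines ∧ ∀ k ∈ Q.lines, ¬ Meet2 m k) ∨
    (m ∈ Q.lines ∧ ∀ ℓ ∈ P.lines, ¬ Meet2 ℓ m) ∨
    (∃ ℓ ∈ P.lines, ∃ k ∈ Q.lines, Meet2 ℓ k ∧ m = ℓ ∪ k) := by
  classical
  simp only [amalg, Finset.mem_union, Finset.mem_filter, Finset.mem_image,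
    Finset.mem_product] at h
  rcases h with (h | h) | h
  · exact Or.inl h
  · exact Or.inr (Or.inl h)
  · obtain ⟨⟨ℓ, k⟩, ⟨⟨hℓ, hk⟩, hm⟩, rfl⟩ := h
    exact Or.inr (Or.inr ⟨ℓ, hℓ, k, hk, hm, rfl⟩)

lemma amalg_lines_pure_P {P Q : PLS} {ℓ : Finset ℕ} (hℓ : ℓ ∈ P.lines)
    (h : ∀ k ∈ Q.lines, ¬ Meet2 ℓ k) : ℓ ∈ (amalg P Q).lines := by
  classical
  simp only [amalg, Finset.mem_union, Finset.mem_filter]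
  exact Or.inl (Or.inl ⟨hℓ, h⟩)

lemma amalg_lines_pure_Q {P Q : PLS} {k : Finset ℕ} (hk : k ∈ Q.lines)
    (h : ∀ ℓ ∈ P.lines, ¬ Meet2 ℓ k) : k ∈ (amalg P Q).lines := by
  classical
  simp only [amalg, Finset.mem_union, Finset.mem_filter]
  exact Or.inl (Or.inr ⟨hk, h⟩)

lemma amalg_lines_glue {P Q : PLS} {ℓ k : Finset ℕ} (hℓ : ℓ ∈ P.lines)
    (hk : k ∈ Q.lines) (h : Meet2 ℓ k) : ℓ ∪ k ∈ (amalg P Q).lines := by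
  classical
  simp only [amalg, Finset.mem_union, Finset.mem_filter, Finset.mem_image, Finset.mem_product]
  exact Or.inr ⟨⟨ℓ, k⟩, ⟨⟨hℓ, hk⟩, h⟩, rfl⟩

/-- Every `P`-line extends to a line of the amalgam. -/
lemma amalg_extend_P {P Q : PLS} {ℓ : Finset ℕ} (hℓ : ℓ ∈ P.lines) :
    ∃ m ∈ (amalg P Q).lines, ℓ ⊆ m := by
  classical
  by_cases h : ∃ k ∈ Q.lines, Meet2 ℓ k
  · obtain ⟨k, hk, hm⟩ := h
    exact ⟨ℓ ∪ k, amalg_lines_glue hℓ hk hm, Finset.subset_union_left⟩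
  · push_neg at h
    exact ⟨ℓ, amalg_lines_pure_P hℓ h, le_refl _⟩

lemma amalg_extend_Q {P Q : PLS} {k : Finset ℕ} (hk : k ∈ Q.lines) :
    ∃ m ∈ (amalg P Q).lines, k ⊆ m := by
  classical
  by_cases h : ∃ ℓ ∈ P.lines, Meet2 ℓ k
  · obtain ⟨ℓ, hℓ, hm⟩ := h
    exact ⟨ℓ ∪ k, amalg_lines_glue hℓ hk hm, Finset.subset_union_right⟩
  · push_neg at h
    exact ⟨k, amalg_lines_pure_Q hk h, le_refl _⟩

section FitLemmas
variable {P Q : PLS} (F : Fit P Q)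

/-- Absorption: on a glued pair, common-part points transfer. -/
lemma Fit.absorb_PQ (F : Fit P Q) {ℓ k : Finset ℕ} (hℓ : ℓ ∈ P.lines) (hk : k ∈ Q.lines)
    (h : Meet2 ℓ k) : ∀ x, x ∈ ℓ → x ∈ Q.pts → x ∈ k := by
  obtain ⟨u, v, huv, huℓ, huk, hvℓ, hvk⟩ := h
  intro x hxℓ hxQ
  rcases eq_or_ne x u with rfl | hxu
  · exact huk
  rcases eq_or_ne x v with rfl | hxv
  · exact hvk
  have hA : ∀ w, w ∈ ℓ → w ∈ k → w ∈ Q.pts ∩ P.pts :=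
    fun w hw hw' => Finset.mem_inter.2 ⟨F.goodQ.1 k hk hw', F.goodP.1 ℓ hℓ hw⟩
  have hxA : x ∈ Q.pts ∩ P.pts := Finset.mem_inter.2 ⟨hxQ, F.goodP.1 ℓ hℓ hxℓ⟩
  have hrel : Rel P u v x := ⟨huv, hxu.symm, hxv.symm, ℓ, hℓ, huℓ, hvℓ, hxℓ⟩
  have hrelQ : Rel Q u v x := (F.agree u v x (hA u huℓ huk) (hA v hvℓ hvk) hxA).1 hrel
  obtain ⟨-, -, -, k', hk', hu', hv', hx'⟩ := hrelQ
  have : k' = k := line_unique F.goodQ hk' hk ⟨u, v, huv, hu', huk, hv', hvk⟩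
  exact this ▸ hx'

lemma Fit.absorb_QP (F : Fit P Q) {ℓ k : Finset ℕ} (hℓ : ℓ ∈ P.lines) (hk : k ∈ Q.lines)
    (h : Meet2 ℓ k) : ∀ x, x ∈ k → x ∈ P.pts → x ∈ ℓ := by
  obtain ⟨u, v, huv, huℓ, huk, hvℓ, hvk⟩ := h
  intro x hxk hxP
  rcases eq_or_ne x u with rfl | hxu
  · exact huℓ
  rcases eq_or_ne x v with rfl | hxv
  · exact hvℓ
  have hA : ∀ w, w ∈ ℓ → w ∈ k → w ∈ Q.pts ∩ P.pts :=
    fun w hw hw' => Finset.mem_inter.2 ⟨F.goodQ.1 k hk hw', F.goodP.1 ℓ hℓ hw⟩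
  have hxA : x ∈ Q.pts ∩ P.pts := Finset.mem_inter.2 ⟨F.goodQ.1 k hk hxk, hxP⟩
  have hrel : Rel Q u v x := ⟨huv, hxu.symm, hxv.symm, k, hk, huk, hvk, hxk⟩
  have hrelP : Rel P u v x := (F.agree u v x (hA u huℓ huk) (hA v hvℓ hvk) hxA).2 hrel
  obtain ⟨-, -, -, ℓ', hℓ', hu', hv', hx'⟩ := hrelP
  have : ℓ' = ℓ := line_unique F.goodP hℓ' hℓ ⟨u, v, huv, hu', huℓ, hv', hvℓ⟩
  exact this ▸ hx'

/-- Partner uniqueness on the `Q` side. -/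
lemma Fit.partner_uniqueQ (F : Fit P Q) {ℓ k₁ k₂ : Finset ℕ} (hℓ : ℓ ∈ P.lines)
    (hk₁ : k₁ ∈ Q.lines) (hk₂ : k₂ ∈ Q.lines) (h₁ : Meet2 ℓ k₁) (h₂ : Meet2 ℓ k₂) :
    k₁ = k₂ := by
  obtain ⟨u, v, huv, huℓ, huk, hvℓ, hvk⟩ := h₁
  have hu2 : u ∈ k₂ := F.absorb_PQ hℓ hk₂ h₂ u huℓ (F.goodQ.1 k₁ hk₁ huk)
  have hv2 : v ∈ k₂ := F.absorb_PQ hℓ hk₂ h₂ v hvℓ (F.goodQ.1 k₁ hk₁ hvk)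
  exact line_unique F.goodQ hk₁ hk₂ ⟨u, v, huv, huk, hu2, hvk, hv2⟩

lemma Fit.partner_uniqueP (F : Fit P Q) {ℓ₁ ℓ₂ k : Finset ℕ} (hℓ₁ : ℓ₁ ∈ P.lines)
    (hℓ₂ : ℓ₂ ∈ P.lines) (hk : k ∈ Q.lines) (h₁ : Meet2 ℓ₁ k) (h₂ : Meet2 ℓ₂ k) :
    ℓ₁ = ℓ₂ := by
  obtain ⟨u, v, huv, huℓ, huk, hvℓ, hvk⟩ := h₁
  have hu2 : u ∈ ℓ₂ := F.absorb_QP hℓ₂ hk h₂ u huk (F.goodP.1 ℓ₁ hℓ₁ huℓ)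
  have hv2 : v ∈ ℓ₂ := F.absorb_QP hℓ₂ hk h₂ v hvk (F.goodP.1 ℓ₁ hℓ₁ hvℓ)
  exact line_unique F.goodP hℓ₁ hℓ₂ ⟨u, v, huv, huℓ, hu2, hvℓ, hv2⟩

/-- Common points of two glued lines lie on both `ℓ`-parts or both `k`-parts. -/
lemma Fit.glue_common (F : Fit P Q) {ℓ₁ k₁ ℓ₂ k₂ : Finset ℕ}
    (hℓ₁ : ℓ₁ ∈ P.lines) (hk₁ : k₁ ∈ Q.lines) (h₁ : Meet2 ℓ₁ k₁)
    (hℓ₂ : ℓ₂ ∈ P.lines) (hk₂ : k₂ ∈ Q.lines) (h₂ : Meet2 ℓ₂ k₂)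
    {z : ℕ} (hz₁ : z ∈ ℓ₁ ∪ k₁) (hz₂ : z ∈ ℓ₂ ∪ k₂) :
    (z ∈ ℓ₁ ∧ z ∈ ℓ₂) ∨ (z ∈ k₁ ∧ z ∈ k₂) := by
  rcases Finset.mem_union.1 hz₁ with hz₁ | hz₁ <;>
    rcases Finset.mem_union.1 hz₂ with hz₂ | hz₂
  · exact Or.inl ⟨hz₁, hz₂⟩
  · -- z ∈ ℓ₁, z ∈ k₂ : z ∈ common part
    have hzk₁ : z ∈ k₁ := F.absorb_PQ hℓ₁ hk₁ h₁ z hz₁ (F.goodQ.1 k₂ hk₂ hz₂)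
    exact Or.inr ⟨hzk₁, hz₂⟩
  · have hzk₂ : z ∈ k₂ := F.absorb_PQ hℓ₂ hk₂ h₂ z hz₂ (F.goodQ.1 k₁ hk₁ hz₁)
    exact Or.inr ⟨hz₁, hzk₂⟩
  · exact Or.inr ⟨hz₁, hz₂⟩

/-- Any two amalgam lines meeting in two points are equal. -/
lemma Fit.amalg_line_unique (F : Fit P Q) {m₁ m₂ : Finset ℕ}
    (h₁ : m₁ ∈ (amalg P Q).lines) (h₂ : m₂ ∈ (amalg P Q).lines) (h : Meet2 m₁ m₂) :
    m₁ = m₂ := by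
  obtain ⟨x, y, hxy, hx1, hx2, hy1, hy2⟩ := h
  rcases amalg_lines_cases h₁ with ⟨hm₁, hpu₁⟩ | ⟨hm₁, hpu₁⟩ | ⟨ℓ₁, hℓ₁, k₁, hk₁, hg₁, rfl⟩ <;>
    rcases amalg_lines_cases h₂ with ⟨hm₂, hpu₂⟩ | ⟨hm₂, hpu₂⟩ | ⟨ℓ₂, hℓ₂, k₂, hk₂, hg₂, rfl⟩
  · exact line_unique F.goodP hm₁ hm₂ ⟨x, y, hxy, hx1, hx2, hy1, hy2⟩
  · exact absurd ⟨x, y, hxy, hx1, hx2, hy1, hy2⟩ (hpu₁ m₂ hm₂)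
  · -- pure P line vs glued line
    have habs : ∀ z, z ∈ m₁ → z ∈ ℓ₂ ∪ k₂ → z ∈ ℓ₂ := by
      intro z hz hz'
      rcases Finset.mem_union.1 hz' with hz' | hz'
      · exact hz'
      · exact F.absorb_QP hℓ₂ hk₂ hg₂ z hz' (F.goodP.1 m₁ hm₁ hz)
    have hxe := habs x hx1 hx2
    have hye := habs y hy1 hy2
    have : m₁ = ℓ₂ := line_unique F.goodP hm₁ hℓ₂ ⟨x, y, hxy, hx1, hxe, hy1, hye⟩
    exact absurd hg₂ (this ▸ hpu₁ k₂ hk₂)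
  · exact absurd ⟨x, y, hxy, hx2, hx1, hy2, hy1⟩ (hpu₂ m₁ hm₁)
  · exact line_unique F.goodQ hm₁ hm₂ ⟨x, y, hxy, hx1, hx2, hy1, hy2⟩
  · -- pure Q line vs glued line
    have habs : ∀ z, z ∈ m₁ → z ∈ ℓ₂ ∪ k₂ → z ∈ k₂ := by
      intro z hz hz'
      rcases Finset.mem_union.1 hz' with hz' | hz'
      · exact F.absorb_PQ hℓ₂ hk₂ hg₂ z hz' (F.goodQ.1 m₁ hm₁ hz)
      · exact hz'
    have hxe := habs x hx1 hx2
    have hye := habs y hy1 hy2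
    have : m₁ = k₂ := line_unique F.goodQ hm₁ hk₂ ⟨x, y, hxy, hx1, hxe, hy1, hye⟩
    rw [← this] at hg₂
    exact absurd hg₂ (hpu₁ ℓ₂ hℓ₂)
  · -- glued vs pure P
    have habs : ∀ z, z ∈ m₂ → z ∈ ℓ₁ ∪ k₁ → z ∈ ℓ₁ := by
      intro z hz hz'
      rcases Finset.mem_union.1 hz' with hz' | hz'
      · exact hz'
      · exact F.absorb_QP hℓ₁ hk₁ hg₁ z hz' (F.goodP.1 m₂ hm₂ hz)
    have hxe := habs x hx2 hx1
    have hye := habs y hy2 hy1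
    have : m₂ = ℓ₁ := line_unique F.goodP hm₂ hℓ₁ ⟨x, y, hxy, hx2, hxe, hy2, hye⟩
    exact absurd hg₁ (this ▸ hpu₂ k₁ hk₁)
  · -- glued vs pure Q
    have habs : ∀ z, z ∈ m₂ → z ∈ ℓ₁ ∪ k₁ → z ∈ k₁ := by
      intro z hz hz'
      rcases Finset.mem_union.1 hz' with hz' | hz'
      · exact F.absorb_PQ hℓ₁ hk₁ hg₁ z hz' (F.goodQ.1 m₂ hm₂ hz)
      · exact hz'
    have hxe := habs x hx2 hx1
    have hye := habs y hy2 hy1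
    have : m₂ = k₁ := line_unique F.goodQ hm₂ hk₁ ⟨x, y, hxy, hx2, hxe, hy2, hye⟩
    rw [← this] at hg₁
    exact absurd hg₁ (hpu₂ ℓ₁ hℓ₁)
  · -- glued vs glued
    rcases F.glue_common hℓ₁ hk₁ hg₁ hℓ₂ hk₂ hg₂ hx1 hx2 with ⟨hxl1, hxl2⟩ | ⟨hxk1, hxk2⟩ <;>
      rcases F.glue_common hℓ₁ hk₁ hg₁ hℓ₂ hk₂ hg₂ hy1 hy2 with ⟨hyl1, hyl2⟩ | ⟨hyk1, hyk2⟩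
    · have : ℓ₁ = ℓ₂ := line_unique F.goodP hℓ₁ hℓ₂ ⟨x, y, hxy, hxl1, hxl2, hyl1, hyl2⟩
      subst this
      have : k₁ = k₂ := F.partner_uniqueQ hℓ₁ hk₁ hk₂ hg₁ hg₂
      rw [this]
    · -- x on the ℓ's, y on the k's
      by_cases hℓeq : ℓ₁ = ℓ₂
      · subst hℓeq
        have : k₁ = k₂ := F.partner_uniqueQ hℓ₁ hk₁ hk₂ hg₁ hg₂
        rw [this]
      · -- use closedness of A in P
        have hm₁A : Meet2 ℓ₁ (Q.pts ∩ P.pts) := by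
          obtain ⟨u, v, huv, hu1, hu2, hv1, hv2⟩ := hg₁
          exact ⟨u, v, huv, hu1, Finset.mem_inter.2 ⟨F.goodQ.1 _ hk₁ hu2, F.goodP.1 _ hℓ₁ hu1⟩,
            hv1, Finset.mem_inter.2 ⟨F.goodQ.1 _ hk₁ hv2, F.goodP.1 _ hℓ₁ hv1⟩⟩
        have hm₂A : Meet2 ℓ₂ (Q.pts ∩ P.pts) := by
          obtain ⟨u, v, huv, hu1, hu2, hv1, hv2⟩ := hg₂
          exact ⟨u, v, huv, hu1, Finset.mem_inter.2 ⟨F.goodQ.1 _ hk₂ hu2, F.goodP.1 _ hℓ₂ hu1⟩,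
            hv1, Finset.mem_inter.2 ⟨F.goodQ.1 _ hk₂ hv2, F.goodP.1 _ hℓ₂ hv1⟩⟩
        have hxA : x ∈ Q.pts ∩ P.pts := F.clP ℓ₁ hℓ₁ ℓ₂ hℓ₂ hℓeq hm₁A hm₂A x hxl1 hxl2
        have hxk1 : x ∈ k₁ := F.absorb_PQ hℓ₁ hk₁ hg₁ x hxl1 (Finset.mem_inter.1 hxA).1
        have hxk2 : x ∈ k₂ := F.absorb_PQ hℓ₂ hk₂ hg₂ x hxl2 (Finset.mem_inter.1 hxA).1
        have : k₁ = k₂ := line_unique F.goodQ hk₁ hk₂ ⟨x, y, hxy, hxk1, hxk2, hyk1, hyk2⟩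
        subst this
        exact absurd (F.partner_uniqueP hℓ₁ hℓ₂ hk₁ hg₁ hg₂) hℓeq
    · -- x on the k's, y on the ℓ's : symmetric
      by_cases hℓeq : ℓ₁ = ℓ₂
      · subst hℓeq
        have : k₁ = k₂ := F.partner_uniqueQ hℓ₁ hk₁ hk₂ hg₁ hg₂
        rw [this]
      · have hm₁A : Meet2 ℓ₁ (Q.pts ∩ P.pts) := by
          obtain ⟨u, v, huv, hu1, hu2, hv1, hv2⟩ := hg₁
          exact ⟨u, v, huv, hu1, Finset.mem_inter.2 ⟨F.goodQ.1 _ hk₁ hu2, F.goodP.1 _ hℓ₁ hu1⟩,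
            hv1, Finset.mem_inter.2 ⟨F.goodQ.1 _ hk₁ hv2, F.goodP.1 _ hℓ₁ hv1⟩⟩
        have hm₂A : Meet2 ℓ₂ (Q.pts ∩ P.pts) := by
          obtain ⟨u, v, huv, hu1, hu2, hv1, hv2⟩ := hg₂
          exact ⟨u, v, huv, hu1, Finset.mem_inter.2 ⟨F.goodQ.1 _ hk₂ hu2, F.goodP.1 _ hℓ₂ hu1⟩,
            hv1, Finset.mem_inter.2 ⟨F.goodQ.1 _ hk₂ hv2, F.goodP.1 _ hℓ₂ hv1⟩⟩
        have hyA : y ∈ Q.pts ∩ P.pts := F.clP ℓ₁ hℓ₁ ℓ₂ hℓ₂ hℓeq hm₁A hm₂A y hyl1 hyl2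
        have hyk1 : y ∈ k₁ := F.absorb_PQ hℓ₁ hk₁ hg₁ y hyl1 (Finset.mem_inter.1 hyA).1
        have hyk2 : y ∈ k₂ := F.absorb_PQ hℓ₂ hk₂ hg₂ y hyl2 (Finset.mem_inter.1 hyA).1
        have : k₁ = k₂ := line_unique F.goodQ hk₁ hk₂ ⟨x, y, hxy, hxk1, hxk2, hyk1, hyk2⟩
        subst this
        exact absurd (F.partner_uniqueP hℓ₁ hℓ₂ hk₁ hg₁ hg₂) hℓeq
    · have : k₁ = k₂ := line_unique F.goodQ hk₁ hk₂ ⟨x, y, hxy, hxk1, hxk2, hyk1, hyk2⟩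
      subst this
      have : ℓ₁ = ℓ₂ := F.partner_uniqueP hℓ₁ hℓ₂ hk₁ hg₁ hg₂
      rw [this]

lemma Fit.amalg_good (F : Fit P Q) : Good (amalg P Q) := by
  refine ⟨?_, ?_, ?_⟩
  · intro m hm
    rcases amalg_lines_cases hm with ⟨hm', -⟩ | ⟨hm', -⟩ | ⟨ℓ, hℓ, k, hk, -, rfl⟩
    · exact (F.goodP.1 m hm').trans Finset.subset_union_left
    · exact (F.goodQ.1 m hm').trans Finset.subset_union_right
    · exact Finset.union_subset
        ((F.goodP.1 ℓ hℓ).trans Finset.subset_union_left)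
        ((F.goodQ.1 k hk).trans Finset.subset_union_right)
  · intro m hm
    rcases amalg_lines_cases hm with ⟨hm', -⟩ | ⟨hm', -⟩ | ⟨ℓ, hℓ, k, hk, -, rfl⟩
    · exact F.goodP.2.1 m hm'
    · exact F.goodQ.2.1 m hm'
    · obtain ⟨x, hx, y, hy, z, hz, h⟩ := F.goodP.2.1 ℓ hℓ
      exact ⟨x, Finset.mem_union_left _ hx, y, Finset.mem_union_left _ hy,
        z, Finset.mem_union_left _ hz, h⟩
  · intro m₁ h₁ m₂ h₂ hne x y hx1 hx2 hy1 hy2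
    by_contra hxy
    exact hne (F.amalg_line_unique h₁ h₂ ⟨x, y, hxy, hx1, hx2, hy1, hy2⟩)

end FitLemmas
section FitLemmas2
variable {P Q : PLS}

lemma Fit.rel_amalg_P (F : Fit P Q) {x y z : ℕ} (hx : x ∈ P.pts) (hy : y ∈ P.pts)
    (hz : z ∈ P.pts) : Rel (amalg P Q) x y z ↔ Rel P x y z := by
  constructor
  · rintro ⟨h1, h2, h3, m, hm, hxm, hym, hzm⟩
    rcases amalg_lines_cases hm with ⟨hm', -⟩ | ⟨hm', hpu⟩ | ⟨ℓ, hℓ, k, hk, hg, rfl⟩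
    · exact ⟨h1, h2, h3, m, hm', hxm, hym, hzm⟩
    · -- pure Q line with three distinct P points: contradiction
      have hA : ∀ w, w ∈ m → w ∈ P.pts → w ∈ Q.pts ∩ P.pts :=
        fun w hw hw' => Finset.mem_inter.2 ⟨F.goodQ.1 m hm' hw, hw'⟩
      have hrelQ : Rel Q x y z := ⟨h1, h2, h3, m, hm', hxm, hym, hzm⟩
      have hrelP : Rel P x y z :=
        (F.agree x y z (hA x hxm hx) (hA y hym hy) (hA z hzm hz)).2 hrelQ
      exact hrelP
    · have habs : ∀ w, w ∈ ℓ ∪ k → w ∈ P.pts → w ∈ ℓ := by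
        intro w hw hwP
        rcases Finset.mem_union.1 hw with hw | hw
        · exact hw
        · exact F.absorb_QP hℓ hk hg w hw hwP
      exact ⟨h1, h2, h3, ℓ, hℓ, habs x hxm hx, habs y hym hy, habs z hzm hz⟩
  · rintro ⟨h1, h2, h3, ℓ, hℓ, hxm, hym, hzm⟩
    obtain ⟨m, hm, hsub⟩ := amalg_extend_P (Q := Q) hℓ
    exact ⟨h1, h2, h3, m, hm, hsub hxm, hsub hym, hsub hzm⟩

lemma Fit.rel_amalg_Q (F : Fit P Q) {x y z : ℕ} (hx : x ∈ Q.pts) (hy : y ∈ Q.pts)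
    (hz : z ∈ Q.pts) : Rel (amalg P Q) x y z ↔ Rel Q x y z := by
  constructor
  · rintro ⟨h1, h2, h3, m, hm, hxm, hym, hzm⟩
    rcases amalg_lines_cases hm with ⟨hm', hpu⟩ | ⟨hm', -⟩ | ⟨ℓ, hℓ, k, hk, hg, rfl⟩
    · have hA : ∀ w, w ∈ m → w ∈ Q.pts → w ∈ Q.pts ∩ P.pts :=
        fun w hw hw' => Finset.mem_inter.2 ⟨hw', F.goodP.1 m hm' hw⟩
      have hrelP : Rel P x y z := ⟨h1, h2, h3, m, hm', hxm, hym, hzm⟩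
      exact (F.agree x y z (hA x hxm hx) (hA y hym hy) (hA z hzm hz)).1 hrelP
    · exact ⟨h1, h2, h3, m, hm', hxm, hym, hzm⟩
    · have habs : ∀ w, w ∈ ℓ ∪ k → w ∈ Q.pts → w ∈ k := by
        intro w hw hwQ
        rcases Finset.mem_union.1 hw with hw | hw
        · exact F.absorb_PQ hℓ hk hg w hw hwQ
        · exact hw
      exact ⟨h1, h2, h3, k, hk, habs x hxm hx, habs y hym hy, habs z hzm hz⟩
  · rintro ⟨h1, h2, h3, k, hk, hxm, hym, hzm⟩
    obtain ⟨m, hm, hsub⟩ := amalg_extend_Q (P := P) hk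
    exact ⟨h1, h2, h3, m, hm, hsub hxm, hsub hym, hsub hzm⟩

/-- Line-down: an amalgam line with three distinct old points restricts into an old line. -/
lemma Fit.line_down (F : Fit P Q) {m : Finset ℕ} (hm : m ∈ (amalg P Q).lines)
    {x y z : ℕ} (hxm : x ∈ m) (hx : x ∈ P.pts) (hym : y ∈ m) (hy : y ∈ P.pts)
    (hzm : z ∈ m) (hz : z ∈ P.pts) (hxy : x ≠ y) (hxz : x ≠ z) (hyz : y ≠ z) :
    ∃ ℓ ∈ P.lines, ∀ w ∈ m, w ∈ P.pts → w ∈ ℓ := by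
  rcases amalg_lines_cases hm with ⟨hm', -⟩ | ⟨hm', hpu⟩ | ⟨ℓ, hℓ, k, hk, hg, rfl⟩
  · exact ⟨m, hm', fun w hw _ => hw⟩
  · -- pure Q line: contradiction via agreement
    have hA : ∀ w, w ∈ m → w ∈ P.pts → w ∈ Q.pts ∩ P.pts :=
      fun w hw hw' => Finset.mem_inter.2 ⟨F.goodQ.1 m hm' hw, hw'⟩
    have hrelQ : Rel Q x y z := ⟨hxy, hxz, hyz, m, hm', hxm, hym, hzm⟩
    have hrelP : Rel P x y z :=
      (F.agree x y z (hA x hxm hx) (hA y hym hy) (hA z hzm hz)).2 hrelQ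
    obtain ⟨-, -, -, ℓ, hℓ, hxℓ, hyℓ, -⟩ := hrelP
    exact absurd ⟨x, y, hxy, hxℓ, hxm, hyℓ, hym⟩ (hpu ℓ hℓ)
  · refine ⟨ℓ, hℓ, fun w hw hwP => ?_⟩
    rcases Finset.mem_union.1 hw with hw | hw
    · exact hw
    · exact F.absorb_QP hℓ hk hg w hw hwP

/-- The `Q`-side is closed in the amalgam. -/
lemma Fit.cl_amalg_Q (F : Fit P Q) : Cl (amalg P Q) Q.pts := by
  intro m₁ h₁ m₂ h₂ hne hM₁ hM₂ p hp₁ hp₂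
  by_contra hpQ
  have key : ∀ m ∈ (amalg P Q).lines, p ∈ m → Meet2 m Q.pts →
      ∃ ℓ ∈ P.lines, p ∈ ℓ ∧ Meet2 ℓ (Q.pts ∩ P.pts) ∧ ∀ w ∈ ℓ, w ∈ m := by
    intro m hm hpm hMm
    rcases amalg_lines_cases hm with ⟨hm', hpu⟩ | ⟨hm', -⟩ | ⟨ℓ, hℓ, k, hk, hg, rfl⟩
    · obtain ⟨u, v, huv, hum, huQ, hvm, hvQ⟩ := hMm
      refine ⟨m, hm', hpm, ⟨u, v, huv, hum, Finset.mem_inter.2 ⟨huQ, F.goodP.1 m hm' hum⟩,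
        hvm, Finset.mem_inter.2 ⟨hvQ, F.goodP.1 m hm' hvm⟩⟩, fun w hw => hw⟩
    · exact absurd (F.goodQ.1 m hm' hpm) hpQ
    · have hpℓ : p ∈ ℓ := by
        rcases Finset.mem_union.1 hpm with h | h
        · exact h
        · exact absurd (F.goodQ.1 k hk h) hpQ
      have hg2 := hg
      obtain ⟨u, v, huv, hu1, hu2, hv1, hv2⟩ := hg2
      exact ⟨ℓ, hℓ, hpℓ, ⟨u, v, huv, hu1,
        Finset.mem_inter.2 ⟨F.goodQ.1 k hk hu2, F.goodP.1 ℓ hℓ hu1⟩, hv1,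
        Finset.mem_inter.2 ⟨F.goodQ.1 k hk hv2, F.goodP.1 ℓ hℓ hv1⟩⟩,
        fun w hw => Finset.mem_union_left _ hw⟩
  obtain ⟨ℓ₁, hℓ₁, hpl₁, hM₁', hsub₁⟩ := key m₁ h₁ hp₁ hM₁
  obtain ⟨ℓ₂, hℓ₂, hpl₂, hM₂', hsub₂⟩ := key m₂ h₂ hp₂ hM₂
  have hℓne : ℓ₁ ≠ ℓ₂ := by
    rintro rfl
    obtain ⟨u, v, huv, huℓ, -, hvℓ, -⟩ := hM₁'
    exact hne (F.amalg_line_unique h₁ h₂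
      ⟨u, v, huv, hsub₁ u huℓ, hsub₂ u huℓ, hsub₁ v hvℓ, hsub₂ v hvℓ⟩)
  have := F.clP ℓ₁ hℓ₁ ℓ₂ hℓ₂ hℓne hM₁' hM₂' p hpl₁ hpl₂
  exact hpQ (Finset.mem_inter.1 this).1

end FitLemmas2
section FitLemmas3
variable {P Q : PLS}

/-- Discipline: a new point of the amalgam lies on at most one line with two old points. -/
lemma Fit.d2 (F : Fit P Q) {p : ℕ} (hpP : p ∉ P.pts)
    {m₁ m₂ : Finset ℕ} (h₁ : m₁ ∈ (amalg P Q).lines) (h₂ : m₂ ∈ (amalg P Q).lines)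
    (hne : m₁ ≠ m₂) (hp₁ : p ∈ m₁) (hp₂ : p ∈ m₂)
    (hM₁ : Meet2 m₁ P.pts) (hM₂ : Meet2 m₂ P.pts) : False := by
  -- each mᵢ yields a Q-line kᵢ through p with Meet2 kᵢ (Q.pts ∩ P.pts)
  have key : ∀ m ∈ (amalg P Q).lines, p ∈ m → Meet2 m P.pts →
      ∃ k ∈ Q.lines, p ∈ k ∧ Meet2 k (Q.pts ∩ P.pts) ∧ ∀ w ∈ k, w ∈ m := by
    intro m hm hpm hMm
    rcases amalg_lines_cases hm with ⟨hm', hpu⟩ | ⟨hm', -⟩ | ⟨ℓ, hℓ, k, hk, hg, rfl⟩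
    · exact absurd (F.goodP.1 m hm' hpm) hpP
    · obtain ⟨u, v, huv, hum, huP, hvm, hvP⟩ := hMm
      refine ⟨m, hm', hpm, ⟨u, v, huv, hum, Finset.mem_inter.2 ⟨F.goodQ.1 m hm' hum, huP⟩,
        hvm, Finset.mem_inter.2 ⟨F.goodQ.1 m hm' hvm, hvP⟩⟩, fun w hw => hw⟩
    · have hpk : p ∈ k := by
        rcases Finset.mem_union.1 hpm with h | h
        · exact absurd (F.goodP.1 ℓ hℓ h) hpP
        · exact h
      have hg2 := hg
      obtain ⟨u, v, huv, hu1, hu2, hv1, hv2⟩ := hg2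
      exact ⟨k, hk, hpk, ⟨u, v, huv, hu2,
        Finset.mem_inter.2 ⟨F.goodQ.1 k hk hu2, F.goodP.1 ℓ hℓ hu1⟩, hv2,
        Finset.mem_inter.2 ⟨F.goodQ.1 k hk hv2, F.goodP.1 ℓ hℓ hv1⟩⟩,
        fun w hw => Finset.mem_union_right _ hw⟩
  obtain ⟨k₁, hk₁, hpk₁, hM₁', hsub₁⟩ := key m₁ h₁ hp₁ hM₁
  obtain ⟨k₂, hk₂, hpk₂, hM₂', hsub₂⟩ := key m₂ h₂ hp₂ hM₂
  have hkne : k₁ ≠ k₂ := by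
    rintro rfl
    obtain ⟨u, v, huv, huk, -, hvk, -⟩ := hM₁'
    exact hne (F.amalg_line_unique h₁ h₂
      ⟨u, v, huv, hsub₁ u huk, hsub₂ u huk, hsub₁ v hvk, hsub₂ v hvk⟩)
  have := F.clQ k₁ hk₁ k₂ hk₂ hkne hM₁' hM₂' p hpk₁ hpk₂
  exact hpP (Finset.mem_inter.1 this).2

end FitLemmas3

/-! ### Renaming -/

/-- Push a `PLS` forward along a map. -/
def mapP (f : ℕ → ℕ) (Q : PLS) : PLS :=
  ⟨Q.pts.image f, Q.lines.image (Finset.image f)⟩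

lemma mapP_good {f : ℕ → ℕ} {Q : PLS} (hf : Set.InjOn f Q.pts) (hQ : Good Q) :
    Good (mapP f Q) := by
  have inj : ∀ ℓ ∈ Q.lines, ∀ x ∈ ℓ, ∀ y ∈ ℓ, f x = f y → x = y := by
    intro ℓ hℓ x hx y hy
    exact fun h => hf (hQ.1 ℓ hℓ hx) (hQ.1 ℓ hℓ hy) h
  refine ⟨?_, ?_, ?_⟩
  · intro m hm
    obtain ⟨ℓ, hℓ, rfl⟩ := Finset.mem_image.1 hm
    exact Finset.image_subset_image (hQ.1 ℓ hℓ)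
  · intro m hm
    obtain ⟨ℓ, hℓ, rfl⟩ := Finset.mem_image.1 hm
    obtain ⟨x, hx, y, hy, z, hz, hxy, hxz, hyz⟩ := hQ.2.1 ℓ hℓ
    exact ⟨f x, Finset.mem_image_of_mem f hx, f y, Finset.mem_image_of_mem f hy,
      f z, Finset.mem_image_of_mem f hz,
      fun h => hxy (inj ℓ hℓ x hx y hy h), fun h => hxz (inj ℓ hℓ x hx z hz h),
      fun h => hyz (inj ℓ hℓ y hy z hz h)⟩
  · intro m₁ h₁ m₂ h₂ hne x y hx1 hx2 hy1 hy2
    obtain ⟨ℓ₁, hℓ₁, rfl⟩ := Finset.mem_image.1 h₁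
    obtain ⟨ℓ₂, hℓ₂, rfl⟩ := Finset.mem_image.1 h₂
    have hℓne : ℓ₁ ≠ ℓ₂ := fun h => hne (by rw [h])
    obtain ⟨x₁, hx₁, rfl⟩ := Finset.mem_image.1 hx1
    obtain ⟨x₂, hx₂, ex⟩ := Finset.mem_image.1 hx2
    obtain ⟨y₁, hy₁, rfl⟩ := Finset.mem_image.1 hy1
    obtain ⟨y₂, hy₂, ey⟩ := Finset.mem_image.1 hy2
    have ex' : x₂ = x₁ := hf (hQ.1 ℓ₂ hℓ₂ hx₂) (hQ.1 ℓ₁ hℓ₁ hx₁) ex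
    have ey' : y₂ = y₁ := hf (hQ.1 ℓ₂ hℓ₂ hy₂) (hQ.1 ℓ₁ hℓ₁ hy₁) ey
    subst ex' ey'
    exact congrArg f (hQ.2.2 ℓ₁ hℓ₁ ℓ₂ hℓ₂ hℓne x₂ y₂ hx₁ hx₂ hy₁ hy₂)

lemma mapP_rel {f : ℕ → ℕ} {Q : PLS} (hf : Set.InjOn f Q.pts) (hQ : Good Q)
    {x y z : ℕ} (hx : x ∈ Q.pts) (hy : y ∈ Q.pts) (hz : z ∈ Q.pts) :
    Rel (mapP f Q) (f x) (f y) (f z) ↔ Rel Q x y z := by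
  constructor
  · rintro ⟨h1, h2, h3, m, hm, hxm, hym, hzm⟩
    obtain ⟨ℓ, hℓ, rfl⟩ := Finset.mem_image.1 hm
    obtain ⟨x', hx', ex⟩ := Finset.mem_image.1 hxm
    obtain ⟨y', hy', ey⟩ := Finset.mem_image.1 hym
    obtain ⟨z', hz', ez⟩ := Finset.mem_image.1 hzm
    have ex' : x' = x := hf (hQ.1 ℓ hℓ hx') hx ex
    have ey' : y' = y := hf (hQ.1 ℓ hℓ hy') hy ey
    have ez' : z' = z := hf (hQ.1 ℓ hℓ hz') hz ez
    subst ex' ey' ez'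
    exact ⟨fun h => h1 (congrArg f h), fun h => h2 (congrArg f h),
      fun h => h3 (congrArg f h), ℓ, hℓ, hx', hy', hz'⟩
  · rintro ⟨h1, h2, h3, ℓ, hℓ, hxm, hym, hzm⟩
    refine ⟨fun h => h1 (hf hx hy h), fun h => h2 (hf hx hz h), fun h => h3 (hf hy hz h),
      ℓ.image f, Finset.mem_image_of_mem _ hℓ, Finset.mem_image_of_mem f hxm,
      Finset.mem_image_of_mem f hym, Finset.mem_image_of_mem f hzm⟩

lemma mapP_cl {f : ℕ → ℕ} {Q : PLS} (hf : Set.InjOn f Q.pts) (hQ : Good Q)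
    {A : Finset ℕ} (hA : A ⊆ Q.pts) (hcl : Cl Q A) : Cl (mapP f Q) (A.image f) := by
  intro m₁ h₁ m₂ h₂ hne hM₁ hM₂ p hp₁ hp₂
  obtain ⟨ℓ₁, hℓ₁, rfl⟩ := Finset.mem_image.1 h₁
  obtain ⟨ℓ₂, hℓ₂, rfl⟩ := Finset.mem_image.1 h₂
  have hℓne : ℓ₁ ≠ ℓ₂ := fun h => hne (by rw [h])
  have pull : ∀ ℓ ∈ Q.lines, Meet2 (ℓ.image f) (A.image f) → Meet2 ℓ A := by
    intro ℓ hℓ ⟨u, v, huv, hu1, hu2, hv1, hv2⟩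
    obtain ⟨u', hu', rfl⟩ := Finset.mem_image.1 hu1
    obtain ⟨v', hv', rfl⟩ := Finset.mem_image.1 hv1
    obtain ⟨u'', hu'', eu⟩ := Finset.mem_image.1 hu2
    obtain ⟨v'', hv'', ev⟩ := Finset.mem_image.1 hv2
    have eu' : u'' = u' := hf (hA hu'') (hQ.1 ℓ hℓ hu') eu
    have ev' : v'' = v' := hf (hA hv'') (hQ.1 ℓ hℓ hv') ev
    subst eu' ev'
    exact ⟨u'', v'', fun h => huv (congrArg f h), hu', hu'', hv', hv''⟩
  obtain ⟨p₁, hp₁', rfl⟩ := Finset.mem_image.1 hp₁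
  obtain ⟨p₂, hp₂', ep⟩ := Finset.mem_image.1 hp₂
  have ep' : p₂ = p₁ := hf (hQ.1 ℓ₂ hℓ₂ hp₂') (hQ.1 ℓ₁ hℓ₁ hp₁') ep
  subst ep'
  exact Finset.mem_image_of_mem f
    (hcl ℓ₁ hℓ₁ ℓ₂ hℓ₂ hℓne (pull ℓ₁ hℓ₁ hM₁) (pull ℓ₂ hℓ₂ hM₂) p₂ hp₁' hp₂')
/-! ### The generic chain -/

abbrev Task := Finset ℕ × PLS

instance : Nonempty Task := ⟨(∅, ⟨∅, ∅⟩)⟩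

noncomputable def tau : ℕ → Task :=
  (exists_surjective_nat Task).choose

lemma tau_surj : Function.Surjective tau :=
  (exists_surjective_nat Task).choose_spec

/-- Rename the non-`A` points of the task structure to fresh big numbers. -/
noncomputable def renF (P : PLS) (t : Task) : ℕ → ℕ := fun x =>
  if x ∈ t.1 then x else ((P.pts ∪ t.2.pts ∪ t.1).sup id) + 3 + x

lemma renF_fix {P : PLS} {t : Task} {x : ℕ} (hx : x ∈ t.1) : renF P t x = x := by
  simp [renF, hx]

lemma renF_big {P : PLS} {t : Task} {x : ℕ} (hx : x ∉ t.1) :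
    renF P t x = ((P.pts ∪ t.2.pts ∪ t.1).sup id) + 3 + x := by
  simp [renF, hx]

lemma renF_inj (P : PLS) (t : Task) : Function.Injective (renF P t) := by
  intro x y h
  classical
  have hb : ∀ z, z ∈ t.1 → z ≤ (P.pts ∪ t.2.pts ∪ t.1).sup id :=
    fun z hz => Finset.le_sup (f := id) (Finset.mem_union_right _ hz)
  by_cases hx : x ∈ t.1 <;> by_cases hy : y ∈ t.1
  · rwa [renF_fix hx, renF_fix hy] at h
  · rw [renF_fix hx, renF_big hy] at h
    have := hb x hx
    omega
  · rw [renF_big hx, renF_fix hy] at h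
    have := hb y hy
    omega
  · rw [renF_big hx, renF_big hy] at h
    omega

lemma renF_notMem_pts {P : PLS} {t : Task} {x : ℕ} (hx : x ∉ t.1) :
    renF P t x ∉ P.pts := by
  rw [renF_big hx]
  intro hmem
  have : ((P.pts ∪ t.2.pts ∪ t.1).sup id) + 3 + x ≤ (P.pts ∪ t.2.pts ∪ t.1).sup id :=
    Finset.le_sup (f := id) (Finset.mem_union_left _ (Finset.mem_union_left _ hmem))
  omega

lemma renF_ge_three {P : PLS} {t : Task} {x : ℕ} (hx : x ∉ t.1) : 3 ≤ renF P t x := by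
  rw [renF_big hx]; omega

open Classical in
noncomputable def stepP (P : PLS) (n : ℕ) : PLS :=
  let t := tau (Nat.unpair n).2
  let Q := mapP (renF P t) t.2
  let P' := if t.1 ⊆ P.pts ∧ Fit P Q then amalg P Q else P
  ⟨insert n P'.pts, P'.lines⟩

noncomputable def chain : ℕ → PLS
  | 0 => ⟨∅, ∅⟩
  | n + 1 => stepP (chain n) n

section StepLemmas
variable {P : PLS} {n : ℕ}

open Classical in
/-- The inner structure of a step: either an amalgam or nothing. -/
lemma stepP_cases (P : PLS) (n : ℕ) :
    ∃ P' : PLS, stepP P n = ⟨insert n P'.pts, P'.lines⟩ ∧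
      (P' = P ∨ ∃ Q : PLS, Fit P Q ∧ P' = amalg P Q ∧
        (∀ x ∈ Q.pts, x ∉ P.pts → 3 ≤ x)) := by
  classical
  set t := tau (Nat.unpair n).2 with ht
  set Q := mapP (renF P t) t.2 with hQ
  by_cases h : t.1 ⊆ P.pts ∧ Fit P Q
  · refine ⟨amalg P Q, ?_, Or.inr ⟨Q, h.2, rfl, ?_⟩⟩
    · simp only [stepP, ← ht, ← hQ, if_pos h]
    · intro x hx hxP
      obtain ⟨x', hx', rfl⟩ := Finset.mem_image.1 hx
      by_cases hx'A : x' ∈ t.1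
      · rw [renF_fix hx'A] at hxP ⊢
        exact absurd (h.1 hx'A) hxP
      · exact renF_ge_three hx'A
  · exact ⟨P, by simp only [stepP, ← ht, ← hQ, if_neg h], Or.inl rfl⟩

lemma step_good (hP : Good P) : Good (stepP P n) := by
  obtain ⟨P', hEq, hcase⟩ := stepP_cases P n
  have hP' : Good P' := by
    rcases hcase with rfl | ⟨Q, F, rfl, -⟩
    · exact hP
    · exact F.amalg_good
  rw [hEq]
  exact ⟨fun ℓ hℓ => (hP'.1 ℓ hℓ).trans (Finset.subset_insert _ _), hP'.2.1, hP'.2.2⟩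

lemma step_pts (P : PLS) (n : ℕ) : P.pts ⊆ (stepP P n).pts := by
  obtain ⟨P', hEq, hcase⟩ := stepP_cases P n
  rw [hEq]
  have : P.pts ⊆ P'.pts := by
    rcases hcase with rfl | ⟨Q, F, rfl, -⟩
    · exact Finset.Subset.refl _
    · exact Finset.subset_union_left
  exact this.trans (Finset.subset_insert _ _)

lemma step_mem_pts (P : PLS) (n : ℕ) : n ∈ (stepP P n).pts := by
  obtain ⟨P', hEq, -⟩ := stepP_cases P n
  rw [hEq]
  exact Finset.mem_insert_self _ _

lemma step_line_up (P : PLS) (n : ℕ) {ℓ : Finset ℕ} (hℓ : ℓ ∈ P.lines) :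
    ∃ m ∈ (stepP P n).lines, ℓ ⊆ m := by
  obtain ⟨P', hEq, hcase⟩ := stepP_cases P n
  rw [hEq]
  rcases hcase with rfl | ⟨Q, F, rfl, -⟩
  · exact ⟨ℓ, hℓ, Finset.Subset.refl _⟩
  · exact amalg_extend_P hℓ

lemma step_rel (hP : Good P) {x y z : ℕ} (hx : x ∈ P.pts) (hy : y ∈ P.pts) (hz : z ∈ P.pts) :
    Rel (stepP P n) x y z ↔ Rel P x y z := by
  obtain ⟨P', hEq, hcase⟩ := stepP_cases P n
  have : Rel (stepP P n) x y z ↔ Rel P' x y z := by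
    rw [hEq]
    exact Iff.rfl
  rw [this]
  rcases hcase with rfl | ⟨Q, F, rfl, -⟩
  · exact Iff.rfl
  · exact F.rel_amalg_P hx hy hz

lemma step_line_down (hP : Good P) {m : Finset ℕ} (hm : m ∈ (stepP P n).lines)
    {x y z : ℕ} (hxm : x ∈ m) (hx : x ∈ P.pts) (hym : y ∈ m) (hy : y ∈ P.pts)
    (hzm : z ∈ m) (hz : z ∈ P.pts) (hxy : x ≠ y) (hxz : x ≠ z) (hyz : y ≠ z) :
    ∃ ℓ ∈ P.lines, ∀ w ∈ m, w ∈ P.pts → w ∈ ℓ := by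
  obtain ⟨P', hEq, hcase⟩ := stepP_cases P n
  have hm' : m ∈ P'.lines := by rw [hEq] at hm; exact hm
  rcases hcase with rfl | ⟨Q, F, rfl, -⟩
  · exact ⟨m, hm', fun w hw _ => hw⟩
  · exact F.line_down hm' hxm hx hym hy hzm hz hxy hxz hyz

lemma step_d2 (hP : Good P) {p : ℕ} (hpP : p ∉ P.pts)
    {m₁ m₂ : Finset ℕ} (h₁ : m₁ ∈ (stepP P n).lines) (h₂ : m₂ ∈ (stepP P n).lines)
    (hne : m₁ ≠ m₂) (hp₁ : p ∈ m₁) (hp₂ : p ∈ m₂)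
    (hM₁ : Meet2 m₁ P.pts) (hM₂ : Meet2 m₂ P.pts) : False := by
  obtain ⟨P', hEq, hcase⟩ := stepP_cases P n
  have h₁' : m₁ ∈ P'.lines := by rw [hEq] at h₁; exact h₁
  have h₂' : m₂ ∈ P'.lines := by rw [hEq] at h₂; exact h₂
  rcases hcase with rfl | ⟨Q, F, rfl, -⟩
  · exact hpP (hP.1 m₁ h₁' hp₁)
  · -- p is in the amalgam's points or not; in either case we conclude
    by_cases hpQ : p ∈ Q.pts
    · exact F.d2 hpP h₁' h₂' hne hp₁ hp₂ hM₁ hM₂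
    · have : p ∈ (amalg P Q).pts := F.amalg_good.1 m₁ h₁' hp₁
      rw [amalg_pts] at this
      rcases Finset.mem_union.1 this with h | h
      · exact hpP h
      · exact hpQ h

end StepLemmas

section ChainLemmas

lemma chain_good (n : ℕ) : Good (chain n) := by
  induction n with
  | zero => exact ⟨by simp [chain], by simp [chain], by simp [chain]⟩
  | succ n ih => exact step_good ih

lemma chain_pts_mono {m n : ℕ} (h : m ≤ n) : (chain m).pts ⊆ (chain n).pts := by
  induction n with
  | zero => simp_all
  | succ n ih =>
    rcases Nat.lt_or_ge m (n+1) with h' | h'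
    · exact (ih (Nat.lt_succ_iff.1 h')).trans (step_pts (chain n) n)
    · have : m = n + 1 := le_antisymm h h'
      subst this
      exact Finset.Subset.refl _

lemma chain_mem_pts (n : ℕ) : n ∈ (chain (n+1)).pts := step_mem_pts (chain n) n

lemma chain_line_up {m n : ℕ} (h : m ≤ n) {ℓ : Finset ℕ} (hℓ : ℓ ∈ (chain m).lines) :
    ∃ ℓ' ∈ (chain n).lines, ℓ ⊆ ℓ' := by
  induction n with
  | zero =>
    have : m = 0 := Nat.le_zero.1 h
    subst this
    exact ⟨ℓ, hℓ, Finset.Subset.refl _⟩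
  | succ n ih =>
    rcases Nat.lt_or_ge m (n+1) with h' | h'
    · obtain ⟨ℓ', hℓ', hsub⟩ := ih (Nat.lt_succ_iff.1 h')
      obtain ⟨ℓ'', hℓ'', hsub'⟩ := step_line_up (chain n) n hℓ'
      exact ⟨ℓ'', hℓ'', hsub.trans hsub'⟩
    · have : m = n + 1 := le_antisymm h h'
      subst this
      exact ⟨ℓ, hℓ, Finset.Subset.refl _⟩

lemma chain_rel {m n : ℕ} (h : m ≤ n) {x y z : ℕ}
    (hx : x ∈ (chain m).pts) (hy : y ∈ (chain m).pts) (hz : z ∈ (chain m).pts) :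
    Rel (chain n) x y z ↔ Rel (chain m) x y z := by
  induction n with
  | zero =>
    have : m = 0 := Nat.le_zero.1 h
    subst this; exact Iff.rfl
  | succ n ih =>
    rcases Nat.lt_or_ge m (n+1) with h' | h'
    · have h'' := Nat.lt_succ_iff.1 h'
      rw [← ih h'']
      exact step_rel (chain_good n) (chain_pts_mono h'' hx) (chain_pts_mono h'' hy)
        (chain_pts_mono h'' hz)
    · have : m = n + 1 := le_antisymm h h'
      subst this; exact Iff.rfl

lemma chain_line_down {m n : ℕ} (h : m ≤ n) :
    ∀ ℓ' ∈ (chain n).lines, ∀ x y z : ℕ, x ∈ ℓ' → x ∈ (chain m).pts → y ∈ ℓ' →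
    y ∈ (chain m).pts → z ∈ ℓ' → z ∈ (chain m).pts → x ≠ y → x ≠ z → y ≠ z →
    ∃ ℓ ∈ (chain m).lines, ∀ w ∈ ℓ', w ∈ (chain m).pts → w ∈ ℓ := by
  induction n with
  | zero =>
    have : m = 0 := Nat.le_zero.1 h
    subst this
    exact fun ℓ' hℓ' x y z _ _ _ _ _ _ _ _ _ => ⟨ℓ', hℓ', fun w hw _ => hw⟩
  | succ n ih =>
    rcases Nat.lt_or_ge m (n+1) with h' | h'
    · have h'' := Nat.lt_succ_iff.1 h'
      intro ℓ' hℓ' x y z hxm hx hym hy hzm hz hxy hxz hyz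
      obtain ⟨ℓ₀, hℓ₀, hsub₀⟩ := step_line_down (chain_good n) hℓ'
        hxm (chain_pts_mono h'' hx) hym (chain_pts_mono h'' hy)
        hzm (chain_pts_mono h'' hz) hxy hxz hyz
      obtain ⟨ℓ₁, hℓ₁, hsub₁⟩ := ih h'' ℓ₀ hℓ₀ x y z (hsub₀ x hxm (chain_pts_mono h'' hx)) hx
        (hsub₀ y hym (chain_pts_mono h'' hy)) hy (hsub₀ z hzm (chain_pts_mono h'' hz)) hz
        hxy hxz hyz
      exact ⟨ℓ₁, hℓ₁, fun w hw hwm =>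
        hsub₁ w (hsub₀ w hw (chain_pts_mono h'' hwm)) hwm⟩
    · have : m = n + 1 := le_antisymm h h'
      subst this
      exact fun ℓ' hℓ' x y z _ _ _ _ _ _ _ _ _ => ⟨ℓ', hℓ', fun w hw _ => hw⟩

/-- Multi-step discipline. -/
lemma chain_d2 {m n : ℕ} (h : m ≤ n) :
    ∀ p : ℕ, p ∈ (chain n).pts → p ∉ (chain m).pts → ∀ m₁ m₂ : Finset ℕ,
    m₁ ∈ (chain n).lines → m₂ ∈ (chain n).lines → m₁ ≠ m₂ → p ∈ m₁ → p ∈ m₂ →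
    Meet2 m₁ (chain m).pts → Meet2 m₂ (chain m).pts → False := by
  induction n with
  | zero =>
    have : m = 0 := Nat.le_zero.1 h
    subst this
    exact fun p hpn hpm _ _ _ _ _ _ _ _ _ => hpm hpn
  | succ n ih =>
    intro p hpn hpm m₁ m₂ h₁ h₂ hne hp₁ hp₂ hM₁ hM₂
    rcases Nat.lt_or_ge m (n+1) with h' | h'
    · have h'' := Nat.lt_succ_iff.1 h'
      by_cases hpn' : p ∈ (chain n).pts
      · obtain ⟨a, b, hab, ha₁, haM, hb₁, hbM⟩ := hM₁
        obtain ⟨c, d, hcd, hc₂, hcM, hd₂, hdM⟩ := hM₂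
        have hpa : p ≠ a := fun e => hpm (e ▸ haM)
        have hpb : p ≠ b := fun e => hpm (e ▸ hbM)
        have hpc : p ≠ c := fun e => hpm (e ▸ hcM)
        have hpd : p ≠ d := fun e => hpm (e ▸ hdM)
        obtain ⟨ℓ₁, hℓ₁, hsub₁⟩ := step_line_down (chain_good n) h₁ hp₁ hpn'
          ha₁ (chain_pts_mono h'' haM) hb₁ (chain_pts_mono h'' hbM) hpa hpb hab
        obtain ⟨ℓ₂, hℓ₂, hsub₂⟩ := step_line_down (chain_good n) h₂ hp₂ hpn'
          hc₂ (chain_pts_mono h'' hcM) hd₂ (chain_pts_mono h'' hdM) hpc hpd hcd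
        by_cases hℓeq : ℓ₁ = ℓ₂
        · subst hℓeq
          obtain ⟨m', hm', hsub'⟩ := step_line_up (chain n) n hℓ₁
          have e₁ : m' = m₁ := line_unique (step_good (chain_good n)) hm' h₁
            ⟨p, a, hpa, hsub' (hsub₁ p hp₁ hpn'), hp₁,
              hsub' (hsub₁ a ha₁ (chain_pts_mono h'' haM)), ha₁⟩
          have e₂ : m' = m₂ := line_unique (step_good (chain_good n)) hm' h₂
            ⟨p, c, hpc, hsub' (hsub₁ p hp₁ hpn'), hp₂,
              hsub' (hsub₂ c hc₂ (chain_pts_mono h'' hcM)), hc₂⟩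
          exact hne (e₁ ▸ e₂)
        · exact ih h'' p hpn' hpm ℓ₁ ℓ₂ hℓ₁ hℓ₂ hℓeq (hsub₁ p hp₁ hpn') (hsub₂ p hp₂ hpn')
            ⟨a, b, hab, hsub₁ a ha₁ (chain_pts_mono h'' haM), haM,
              hsub₁ b hb₁ (chain_pts_mono h'' hbM), hbM⟩
            ⟨c, d, hcd, hsub₂ c hc₂ (chain_pts_mono h'' hcM), hcM,
              hsub₂ d hd₂ (chain_pts_mono h'' hdM), hdM⟩
      · have hM₁' : Meet2 m₁ (chain n).pts := by
          obtain ⟨a, b, hab, ha, haM, hb, hbM⟩ := hM₁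
          exact ⟨a, b, hab, ha, chain_pts_mono h'' haM, hb, chain_pts_mono h'' hbM⟩
        have hM₂' : Meet2 m₂ (chain n).pts := by
          obtain ⟨a, b, hab, ha, haM, hb, hbM⟩ := hM₂
          exact ⟨a, b, hab, ha, chain_pts_mono h'' haM, hb, chain_pts_mono h'' hbM⟩
        exact step_d2 (chain_good n) hpn' h₁ h₂ hne hp₁ hp₂ hM₁' hM₂'
    · have : m = n + 1 := le_antisymm h h'
      subst this
      exact hpm hpn

end ChainLemmas
/-! ### Closed finite subsets, the limit structure -/

def ClosedAt (m : ℕ) (F : Finset ℕ) : Prop :=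
  F ⊆ (chain m).pts ∧ Cl (chain m) F

lemma closedAt_mono {m n : ℕ} (h : m ≤ n) {F : Finset ℕ} (hF : ClosedAt m F) :
    ClosedAt n F := by
  obtain ⟨hsub, hcl⟩ := hF
  refine ⟨hsub.trans (chain_pts_mono h), ?_⟩
  intro ℓ₁ h₁ ℓ₂ h₂ hne hM₁ hM₂ p hp₁ hp₂
  obtain ⟨a, b, hab, ha₁, haF, hb₁, hbF⟩ := hM₁
  obtain ⟨c, d, hcd, hc₂, hcF, hd₂, hdF⟩ := hM₂
  by_cases hpm : p ∈ (chain m).pts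
  · -- p is an old point
    by_cases hpabcd : p = a ∨ p = b ∨ p = c ∨ p = d
    · rcases hpabcd with rfl | rfl | rfl | rfl
      exacts [haF, hbF, hcF, hdF]
    · push_neg at hpabcd
      obtain ⟨hpa, hpb, hpc, hpd⟩ := hpabcd
      obtain ⟨ℓ₁', hℓ₁', hsub₁⟩ := chain_line_down h ℓ₁ h₁ p a b hp₁ hpm ha₁ (hsub haF)
        hb₁ (hsub hbF) hpa hpb hab
      obtain ⟨ℓ₂', hℓ₂', hsub₂⟩ := chain_line_down h ℓ₂ h₂ p c d hp₂ hpm hc₂ (hsub hcF)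
        hd₂ (hsub hdF) hpc hpd hcd
      by_cases hℓeq : ℓ₁' = ℓ₂'
      · exfalso
        subst hℓeq
        obtain ⟨m', hm', hsub'⟩ := chain_line_up h hℓ₁'
        have e₁ : m' = ℓ₁ := line_unique (chain_good _) hm' h₁
          ⟨a, b, hab, hsub' (hsub₁ a ha₁ (hsub haF)), ha₁,
            hsub' (hsub₁ b hb₁ (hsub hbF)), hb₁⟩
        have e₂ : m' = ℓ₂ := line_unique (chain_good _) hm' h₂
          ⟨c, d, hcd, hsub' (hsub₂ c hc₂ (hsub hcF)), hc₂,
            hsub' (hsub₂ d hd₂ (hsub hdF)), hd₂⟩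
        exact hne (e₁ ▸ e₂)
      · exact hcl ℓ₁' hℓ₁' ℓ₂' hℓ₂' hℓeq
          ⟨a, b, hab, hsub₁ a ha₁ (hsub haF), haF, hsub₁ b hb₁ (hsub hbF), hbF⟩
          ⟨c, d, hcd, hsub₂ c hc₂ (hsub hcF), hcF, hsub₂ d hd₂ (hsub hdF), hdF⟩
          p (hsub₁ p hp₁ hpm) (hsub₂ p hp₂ hpm)
  · -- p is a new point: contradiction with the discipline
    exact absurd (chain_d2 h p ((chain_good _).1 ℓ₁ h₁ hp₁) hpm ℓ₁ ℓ₂ h₁ h₂ hne hp₁ hp₂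
      ⟨a, b, hab, ha₁, hsub haF, hb₁, hsub hbF⟩
      ⟨c, d, hcd, hc₂, hsub hcF, hd₂, hsub hdF⟩) not_false
  
/-- The limit collinearity relation. -/
def RM (x y z : ℕ) : Prop := ∃ n, Rel (chain n) x y z

lemma mem_chain_pts (x : ℕ) : x ∈ (chain (x+1)).pts := chain_mem_pts x

lemma RM_iff {m x y z : ℕ} (hx : x ∈ (chain m).pts) (hy : y ∈ (chain m).pts)
    (hz : z ∈ (chain m).pts) : RM x y z ↔ Rel (chain m) x y z := by
  constructor
  · rintro ⟨n, hn⟩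
    have hN : Rel (chain (max n m)) x y z := by
      obtain ⟨hx', hy', hz'⟩ := Rel_mem (chain_good n) hn
      exact (chain_rel (le_max_left n m) hx' hy' hz').2 hn
    exact (chain_rel (le_max_right n m) hx hy hz).1 hN
  · exact fun h => ⟨m, h⟩

lemma RM_of_rel {n x y z : ℕ} (h : Rel (chain n) x y z) : RM x y z := ⟨n, h⟩

lemma RM_ax : RAx RM := by
  constructor
  · rintro a b c ⟨n, h1, h2, h3, -⟩; exact ⟨h1, h2, h3⟩
  · rintro a b c ⟨n, h⟩; exact ⟨n, ((relAx (chain_good n)).symm_swap a b c h)⟩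
  · rintro a b c ⟨n, h⟩; exact ⟨n, ((relAx (chain_good n)).symm_rot a b c h)⟩
  · rintro a b c d ⟨n₁, h₁⟩ ⟨n₂, h₂⟩ x y z hx hy hz hxy hxz hyz
    set N := max n₁ n₂ with hN
    obtain ⟨ha, hb, hc⟩ := Rel_mem (chain_good n₁) h₁
    obtain ⟨ha₂, hb₂, hd₂⟩ := Rel_mem (chain_good n₂) h₂
    have h₁' : Rel (chain N) a b c :=
      (chain_rel (le_max_left _ _) ha hb hc).2 h₁
    have h₂' : Rel (chain N) a b d :=
      (chain_rel (le_max_right _ _) ha₂ hb₂ hd₂).2 h₂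
    exact ⟨N, (relAx (chain_good N)).exchange a b c d h₁' h₂' x y z hx hy hz hxy hxz hyz⟩

open Classical in
/-- The limit wedge function. -/
noncomputable def wedgeM (a b c d : ℕ) : ℕ :=
  if h : ∃ p, a ≠ b ∧ c ≠ d ∧ lineOf RM a b ≠ lineOf RM c d ∧
      p ∈ lineOf RM a b ∧ p ∈ lineOf RM c d ∧ p ∉ ({a, b, c, d} : Set ℕ)
  then h.choose else a

/-- The limit ∧-matroid. -/
noncomputable def Mstar : WM ℕ where
  carrier := Set.univ
  R := RM
  wedge := wedgeM
  R_mem := fun _ _ _ _ => ⟨trivial, trivial, trivial⟩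
  wedge_mem := fun _ _ _ _ _ _ _ _ => trivial
  irrefl := RM_ax.irrefl
  symm_swap := RM_ax.symm_swap
  symm_rot := RM_ax.symm_rot
  exchange := RM_ax.exchange
  wedge_det := by
    intro a b c d _ _ _ _
    classical
    by_cases h : ∃ p, a ≠ b ∧ c ≠ d ∧ lineOf RM a b ≠ lineOf RM c d ∧
        p ∈ lineOf RM a b ∧ p ∈ lineOf RM c d ∧ p ∉ ({a, b, c, d} : Set ℕ)
    · left
      have hs := h.choose_spec
      rw [wedgeM, dif_pos h]
      exact ⟨hs.1, hs.2.1, hs.2.2.1, hs.2.2.2.1, hs.2.2.2.2.1, hs.2.2.2.2.2⟩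
    · right
      constructor
      · rw [wedgeM, dif_neg h]
      · intro ⟨p, h1, h2, h3, h4, h5, h6⟩
        exact h ⟨p, h1, h2, h3, h4, h5, h6⟩

/-- Key uniqueness: determination of `wedgeM` by its characteristic property. -/
lemma wedgeM_eq_of {a b c d p : ℕ} (hab : a ≠ b) (hcd : c ≠ d)
    (hlines : lineOf RM a b ≠ lineOf RM c d) (hp₁ : p ∈ lineOf RM a b)
    (hp₂ : p ∈ lineOf RM c d) (hp : p ∉ ({a, b, c, d} : Set ℕ)) :
    wedgeM a b c d = p := by
  classical
  have h : ∃ q, a ≠ b ∧ c ≠ d ∧ lineOf RM a b ≠ lineOf RM c d ∧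
      q ∈ lineOf RM a b ∧ q ∈ lineOf RM c d ∧ q ∉ ({a, b, c, d} : Set ℕ) :=
    ⟨p, hab, hcd, hlines, hp₁, hp₂, hp⟩
  rw [wedgeM, dif_pos h]
  have hs := h.choose_spec
  by_contra hne
  exact hlines (lineOf_eq_of_two_mem RM_ax hab hcd hne hs.2.2.2.1 hp₁ hs.2.2.2.2.1 hp₂)

lemma wedgeM_eq_left {a b c d : ℕ}
    (h : ¬ ∃ p, a ≠ b ∧ c ≠ d ∧ lineOf RM a b ≠ lineOf RM c d ∧
      p ∈ lineOf RM a b ∧ p ∈ lineOf RM c d ∧ p ∉ ({a, b, c, d} : Set ℕ)) :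
    wedgeM a b c d = a := by
  classical
  rw [wedgeM, dif_neg h]

/-- Three non-collinear points: `0, 1, 2`. -/
lemma chain_no012 (n : ℕ) : ∀ ℓ ∈ (chain n).lines, ¬(0 ∈ ℓ ∧ 1 ∈ ℓ ∧ 2 ∈ ℓ) := by
  induction n with
  | zero => simp [chain]
  | succ n ih =>
    have step := stepP_cases (chain n) n
    obtain ⟨P', hEq, hcase⟩ := step
    have hlines : (chain (n+1)).lines = P'.lines := by
      show (stepP (chain n) n).lines = P'.lines
      rw [hEq]
    rw [hlines]
    rcases hcase with rfl | ⟨Q, F, rfl, hbig⟩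
    · exact ih
    · intro m hm ⟨h0, h1, h2⟩
      have small : ∀ i : ℕ, i < 3 → i ∈ Q.pts → i ∈ (chain n).pts := by
        intro i hi hiQ
        by_contra hiP
        have := hbig i hiQ hiP
        omega
      rcases amalg_lines_cases hm with ⟨hm', -⟩ | ⟨hm', -⟩ | ⟨ℓ, hℓ, k, hk, hg, rfl⟩
      · exact ih m hm' ⟨h0, h1, h2⟩
      · -- pure Q line: transfer by agreement
        have h0' : (0:ℕ) ∈ (chain n).pts := small 0 (by norm_num) (F.goodQ.1 m hm' h0)
        have h1' : (1:ℕ) ∈ (chain n).pts := small 1 (by norm_num) (F.goodQ.1 m hm' h1)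
        have h2' : (2:ℕ) ∈ (chain n).pts := small 2 (by norm_num) (F.goodQ.1 m hm' h2)
        have hrelQ : Rel Q 0 1 2 := ⟨by norm_num, by norm_num, by norm_num, m, hm', h0, h1, h2⟩
        have hrelP : Rel (chain n) 0 1 2 := (F.agree 0 1 2
          (Finset.mem_inter.2 ⟨F.goodQ.1 m hm' h0, h0'⟩)
          (Finset.mem_inter.2 ⟨F.goodQ.1 m hm' h1, h1'⟩)
          (Finset.mem_inter.2 ⟨F.goodQ.1 m hm' h2, h2'⟩)).2 hrelQ
        obtain ⟨-, -, -, ℓ, hℓ, ha, hb, hc⟩ := hrelP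
        exact ih ℓ hℓ ⟨ha, hb, hc⟩
      · -- glued line
        have absorb : ∀ i : ℕ, i < 3 → i ∈ ℓ ∪ k → i ∈ ℓ := by
          intro i hi hik
          rcases Finset.mem_union.1 hik with h | h
          · exact h
          · exact F.absorb_QP hℓ hk hg i h (small i hi (F.goodQ.1 k hk h))
        exact ih ℓ hℓ ⟨absorb 0 (by norm_num) h0, absorb 1 (by norm_num) h1,
          absorb 2 (by norm_num) h2⟩

lemma not_RM_012 : ¬ RM 0 1 2 := by
  rintro ⟨n, -, -, -, ℓ, hℓ, h0, h1, h2⟩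
  exact chain_no012 n ℓ hℓ ⟨h0, h1, h2⟩
/-! ### Richness of the limit -/

/-- `Rel` and `Cl` only depend on the lines. -/
lemma rel_lines_only {s s' : Finset ℕ} {L : Finset (Finset ℕ)} (x y z : ℕ) :
    Rel ⟨s, L⟩ x y z ↔ Rel ⟨s', L⟩ x y z := Iff.rfl

lemma rich {m : ℕ} {A : Finset ℕ} (hA : ClosedAt m A) (Q₀ : PLS) (hQ : Good Q₀)
    (hAQ : A ⊆ Q₀.pts) (hclQ : Cl Q₀ A)
    (hagree : ∀ x y z, x ∈ A → y ∈ A → z ∈ A → (Rel (chain m) x y z ↔ Rel Q₀ x y z)) :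
    ∃ (g : ℕ → ℕ) (n : ℕ), Set.InjOn g ↑Q₀.pts ∧ (∀ a ∈ A, g a = a) ∧
      (∀ x y z, x ∈ Q₀.pts → y ∈ Q₀.pts → z ∈ Q₀.pts →
        (Rel Q₀ x y z ↔ RM (g x) (g y) (g z))) ∧
      (∀ x ∈ Q₀.pts, g x ∈ (chain n).pts) ∧
      ClosedAt n (Q₀.pts.image g) := by
  classical
  obtain ⟨k, htk⟩ := tau_surj (A, Q₀)
  set n := Nat.pair m k with hn
  have hmn : m ≤ n := Nat.left_le_pair m k
  set P := chain n with hP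
  set t : Task := (A, Q₀) with ht
  set e := renF P t with he
  set Q := mapP e t.2 with hQdef
  have einj : Set.InjOn e ↑Q₀.pts := fun x _ y _ h => renF_inj P t h
  have efix : ∀ a ∈ A, e a = a := fun a ha => renF_fix (t := t) ha
  have hAn : ClosedAt n A := closedAt_mono hmn hA
  have hApts : A ⊆ P.pts := hAn.1
  have hAQ' : ∀ a ∈ A, a ∈ Q.pts := by
    intro a ha
    have : e a ∈ Q.pts := Finset.mem_image_of_mem e (hAQ ha)
    rwa [efix a ha] at this
  have hQP : Q.pts ∩ P.pts = A := by
    ext x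
    simp only [Finset.mem_inter]
    constructor
    · rintro ⟨hxQ, hxP⟩
      obtain ⟨x', hx', rfl⟩ := Finset.mem_image.1 hxQ
      by_cases hx'A : x' ∈ t.1
      · rwa [efix x' hx'A]
      · exact absurd hxP (renF_notMem_pts hx'A)
    · intro hx
      exact ⟨hAQ' x hx, hApts hx⟩
  have hAimg : A.image e = A := by
    ext x
    simp only [Finset.mem_image]
    constructor
    · rintro ⟨x', hx', rfl⟩
      rwa [efix x' hx']
    · intro hx
      exact ⟨x, hx, efix x hx⟩
  -- the Fit structure
  have hrelQ : ∀ x y z, x ∈ Q₀.pts → y ∈ Q₀.pts → z ∈ Q₀.pts →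
      (Rel Q (e x) (e y) (e z) ↔ Rel Q₀ x y z) := fun x y z hx hy hz =>
    mapP_rel einj hQ hx hy hz
  have hFit : Fit P Q := by
    refine ⟨chain_good n, mapP_good einj hQ, ?_, ?_, ?_⟩
    · rw [hQP]; exact hAn.2
    · rw [hQP, ← hAimg]
      exact mapP_cl einj hQ hAQ hclQ
    · intro x y z hx hy hz
      rw [hQP] at hx hy hz
      calc Rel P x y z ↔ Rel (chain m) x y z := chain_rel hmn (hA.1 hx) (hA.1 hy) (hA.1 hz)
        _ ↔ Rel Q₀ x y z := hagree x y z hx hy hz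
        _ ↔ Rel Q (e x) (e y) (e z) := (hrelQ x y z (hAQ hx) (hAQ hy) (hAQ hz)).symm
        _ ↔ Rel Q x y z := by rw [efix x hx, efix y hy, efix z hz]
  -- the chain executes the amalgam at step n
  have hcond : t.1 ⊆ P.pts ∧ Fit P Q := ⟨hApts, hFit⟩
  have hu2 : (Nat.unpair n).2 = k := by rw [hn, Nat.unpair_pair]
  have htt : tau (Nat.unpair n).2 = t := by rw [hu2, htk]
  have hchain : chain (n + 1) = ⟨insert n (amalg P Q).pts, (amalg P Q).lines⟩ := by
    show stepP (chain n) n = _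
    simp only [stepP]
    rw [htt, if_pos hcond]
  have hlines : (chain (n + 1)).lines = (amalg P Q).lines := by rw [hchain]
  have hpts : (amalg P Q).pts ⊆ (chain (n + 1)).pts := by
    rw [hchain]
    exact Finset.subset_insert _ _
  have hrel_next : ∀ x y z : ℕ, Rel (chain (n+1)) x y z ↔ Rel (amalg P Q) x y z := by
    intro x y z
    unfold Rel
    rw [hlines]
  refine ⟨e, n + 1, einj, efix, ?_, ?_, ?_⟩
  · intro x y z hx hy hz
    have hmem : ∀ w ∈ Q₀.pts, e w ∈ Q.pts := fun w hw => Finset.mem_image_of_mem e hw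
    calc Rel Q₀ x y z ↔ Rel Q (e x) (e y) (e z) := (hrelQ x y z hx hy hz).symm
      _ ↔ Rel (amalg P Q) (e x) (e y) (e z) :=
          (hFit.rel_amalg_Q (hmem x hx) (hmem y hy) (hmem z hz)).symm
      _ ↔ RM (e x) (e y) (e z) := by
          rw [← hrel_next]
          exact (RM_iff (hpts (Finset.mem_union_right _ (hmem x hx)))
            (hpts (Finset.mem_union_right _ (hmem y hy)))
            (hpts (Finset.mem_union_right _ (hmem z hz)))).symm
  · intro x hx
    exact hpts (Finset.mem_union_right _ (Finset.mem_image_of_mem e hx))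
  · constructor
    · intro x hx
      obtain ⟨x', hx', rfl⟩ := Finset.mem_image.1 hx
      exact hpts (Finset.mem_union_right _ (Finset.mem_image_of_mem e hx'))
    · have : Q₀.pts.image e = Q.pts := rfl
      rw [this]
      intro ℓ₁ h₁ ℓ₂ h₂ hne hM₁ hM₂ p hp₁ hp₂
      rw [hlines] at h₁ h₂
      exact hFit.cl_amalg_Q ℓ₁ h₁ ℓ₂ h₂ hne hM₁ hM₂ p hp₁ hp₂
/-! ### Wedge transfer -/

lemma wedgeM_spec {a b c d : ℕ}
    (h : ∃ p, a ≠ b ∧ c ≠ d ∧ lineOf RM a b ≠ lineOf RM c d ∧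
      p ∈ lineOf RM a b ∧ p ∈ lineOf RM c d ∧ p ∉ ({a, b, c, d} : Set ℕ)) :
    wedgeM a b c d ∈ lineOf RM a b ∧ wedgeM a b c d ∈ lineOf RM c d ∧
      wedgeM a b c d ∉ ({a, b, c, d} : Set ℕ) := by
  classical
  rw [wedgeM, dif_pos h]
  have hs := h.choose_spec
  exact ⟨hs.2.2.2.1, hs.2.2.2.2.1, hs.2.2.2.2.2⟩

/-- A finite set closed at some stage is closed under `wedgeM`. -/
lemma closedAt_wedge_closed {n : ℕ} {F : Finset ℕ} (hF : ClosedAt n F)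
    {a b c d : ℕ} (ha : a ∈ F) (hb : b ∈ F) (hc : c ∈ F) (hd : d ∈ F) :
    wedgeM a b c d ∈ F := by
  classical
  by_cases h : ∃ p, a ≠ b ∧ c ≠ d ∧ lineOf RM a b ≠ lineOf RM c d ∧
      p ∈ lineOf RM a b ∧ p ∈ lineOf RM c d ∧ p ∉ ({a, b, c, d} : Set ℕ)
  · obtain ⟨hw1, hw2, hw3⟩ := wedgeM_spec h
    have h' := h
    obtain ⟨p₀, hab, hcd, hlines, -, -, -⟩ := h'
    set p := wedgeM a b c d with hp
    simp only [Set.mem_insert_iff, Set.mem_singleton_iff, not_or] at hw3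
    obtain ⟨hpa, hpb, hpc, hpd⟩ := hw3
    have hRab : RM a b p := by
      rw [mem_lineOf_iff] at hw1
      rcases hw1 with h | h | h
      exacts [absurd h hpa, absurd h hpb, h]
    have hRcd : RM c d p := by
      rw [mem_lineOf_iff] at hw2
      rcases hw2 with h | h | h
      exacts [absurd h hpc, absurd h hpd, h]
    obtain ⟨n₁, -, -, -, ℓ₁, hℓ₁, ha₁, hb₁, hp₁⟩ := hRab
    obtain ⟨n₂, -, -, -, ℓ₂, hℓ₂, hc₂, hd₂, hp₂⟩ := hRcd
    set N := max n (max n₁ n₂) with hN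
    have hn₁N : n₁ ≤ N := (le_max_left n₁ n₂).trans (le_max_right n (max n₁ n₂))
    have hn₂N : n₂ ≤ N := (le_max_right n₁ n₂).trans (le_max_right n (max n₁ n₂))
    obtain ⟨ℓ₁', hℓ₁', hsub₁⟩ := chain_line_up hn₁N hℓ₁
    obtain ⟨ℓ₂', hℓ₂', hsub₂⟩ := chain_line_up hn₂N hℓ₂
    have hne : ℓ₁' ≠ ℓ₂' := by
      intro heq
      apply hlines
      have memor : ∀ w, w ∈ ℓ₂' → w ∈ lineOf RM a b := by
        intro w hw
        rw [mem_lineOf_iff]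
        rcases eq_or_ne w a with rfl | hwa
        · exact Or.inl rfl
        rcases eq_or_ne w b with rfl | hwb
        · exact Or.inr (Or.inl rfl)
        refine Or.inr (Or.inr (RM_of_rel (n := N)
          ⟨hab, hwa.symm, hwb.symm, ℓ₁', hℓ₁', hsub₁ ha₁, hsub₁ hb₁, heq ▸ hw⟩))
      exact (lineOf_eq_of_mem RM_ax hab hcd (memor c (hsub₂ hc₂)) (memor d (hsub₂ hd₂))).symm
    have hclN := closedAt_mono (le_max_left n (max n₁ n₂)) hF
    exact hclN.2 ℓ₁' hℓ₁' ℓ₂' hℓ₂' hne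
      ⟨a, b, hab, hsub₁ ha₁, ha, hsub₁ hb₁, hb⟩
      ⟨c, d, hcd, hsub₂ hc₂, hc, hsub₂ hd₂, hd⟩
      p (hsub₁ hp₁) (hsub₂ hp₂)
  · rw [wedgeM_eq_left h]; exact ha

/-- The relational axioms of a `WM`. -/
lemma WM.rax {W : Type*} (N : WM W) : RAx N.R :=
  ⟨N.irrefl, N.symm_swap, N.symm_rot, N.exchange⟩

section Transfer
variable {W : Type*} (N : WM W) (g : W → ℕ)

/-- Transfer of line-distinctness along a relation-preserving injection. -/
lemma lines_transfer (hinj : Set.InjOn g N.carrier)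
    (hrel : ∀ a ∈ N.carrier, ∀ b ∈ N.carrier, ∀ c ∈ N.carrier,
      (N.R a b c ↔ RM (g a) (g b) (g c)))
    {a b c d : W} (haC : a ∈ N.carrier) (hbC : b ∈ N.carrier) (hcC : c ∈ N.carrier)
    (hdC : d ∈ N.carrier) (hab : a ≠ b) (hcd : c ≠ d) :
    lineOf N.R a b = lineOf N.R c d ↔ lineOf RM (g a) (g b) = lineOf RM (g c) (g d) := by
  have hgab : g a ≠ g b := fun h => hab (hinj haC hbC h)
  have hgcd : g c ≠ g d := fun h => hcd (hinj hcC hdC h)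
  have push : ∀ x ∈ N.carrier, x ∈ lineOf N.R a b → g x ∈ lineOf RM (g a) (g b) := by
    intro x hxC hx
    rw [mem_lineOf_iff] at hx ⊢
    rcases hx with rfl | rfl | hx
    · exact Or.inl rfl
    · exact Or.inr (Or.inl rfl)
    · exact Or.inr (Or.inr ((hrel a haC b hbC x hxC).1 hx))
  have pull : ∀ x ∈ N.carrier, g x ∈ lineOf RM (g a) (g b) → x ∈ lineOf N.R a b := by
    intro x hxC hx
    rw [mem_lineOf_iff] at hx ⊢
    rcases hx with h | h | h
    · exact Or.inl (hinj hxC haC h)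
    · exact Or.inr (Or.inl (hinj hxC hbC h))
    · exact Or.inr (Or.inr ((hrel a haC b hbC x hxC).2 h))
  constructor
  · intro h
    have hc' : g c ∈ lineOf RM (g a) (g b) := push c hcC (h ▸ mem_lineOf_left)
    have hd' : g d ∈ lineOf RM (g a) (g b) := push d hdC (h ▸ mem_lineOf_right)
    exact (lineOf_eq_of_mem RM_ax hgab hgcd hc' hd').symm
  · intro h
    have hc' : c ∈ lineOf N.R a b := pull c hcC (h ▸ mem_lineOf_left)
    have hd' : d ∈ lineOf N.R a b := pull d hdC (h ▸ mem_lineOf_right)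
    exact (lineOf_eq_of_mem (WM.rax N) hab hcd hc' hd').symm

/-- Wedge transfer along a closed relation-preserving injection into the limit. -/
lemma wedge_transfer (hinj : Set.InjOn g N.carrier)
    (hrel : ∀ a ∈ N.carrier, ∀ b ∈ N.carrier, ∀ c ∈ N.carrier,
      (N.R a b c ↔ RM (g a) (g b) (g c)))
    (hclose : ∀ a ∈ N.carrier, ∀ b ∈ N.carrier, ∀ c ∈ N.carrier, ∀ d ∈ N.carrier,
      wedgeM (g a) (g b) (g c) (g d) ∈ g '' N.carrier)
    {a b c d : W} (haC : a ∈ N.carrier) (hbC : b ∈ N.carrier) (hcC : c ∈ N.carrier)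
    (hdC : d ∈ N.carrier) :
    g (N.wedge a b c d) = wedgeM (g a) (g b) (g c) (g d) := by
  have push : ∀ u ∈ N.carrier, ∀ v ∈ N.carrier, ∀ x ∈ N.carrier,
      x ∈ lineOf N.R u v → g x ∈ lineOf RM (g u) (g v) := by
    intro u huC v hvC x hxC hx
    rw [mem_lineOf_iff] at hx ⊢
    rcases hx with rfl | rfl | hx
    · exact Or.inl rfl
    · exact Or.inr (Or.inl rfl)
    · exact Or.inr (Or.inr ((hrel u huC v hvC x hxC).1 hx))
  have pull : ∀ u ∈ N.carrier, ∀ v ∈ N.carrier, ∀ x ∈ N.carrier,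
      g x ∈ lineOf RM (g u) (g v) → x ∈ lineOf N.R u v := by
    intro u huC v hvC x hxC hx
    rw [mem_lineOf_iff] at hx ⊢
    rcases hx with h | h | h
    · exact Or.inl (hinj hxC huC h)
    · exact Or.inr (Or.inl (hinj hxC hvC h))
    · exact Or.inr (Or.inr ((hrel u huC v hvC x hxC).2 h))
  rcases N.wedge_det a b c d haC hbC hcC hdC with
    ⟨hab, hcd, hldist, hw1, hw2, hwnot⟩ | ⟨hwa, hnone⟩
  · -- N has a genuine intersection point
    set p := N.wedge a b c d with hp
    have hpC : p ∈ N.carrier := N.wedge_mem a b c d haC hbC hcC hdC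
    have hgdist : lineOf RM (g a) (g b) ≠ lineOf RM (g c) (g d) := by
      intro h
      exact hldist ((lines_transfer N g hinj hrel haC hbC hcC hdC hab hcd).2 h)
    have hgp1 : g p ∈ lineOf RM (g a) (g b) := push a haC b hbC p hpC hw1
    have hgp2 : g p ∈ lineOf RM (g c) (g d) := push c hcC d hdC p hpC hw2
    have hgpnot : g p ∉ ({g a, g b, g c, g d} : Set ℕ) := by
      simp only [Set.mem_insert_iff, Set.mem_singleton_iff, not_or]
      simp only [Set.mem_insert_iff, Set.mem_singleton_iff, not_or] at hwnot
      exact ⟨fun h => hwnot.1 (hinj hpC haC h), fun h => hwnot.2.1 (hinj hpC hbC h),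
        fun h => hwnot.2.2.1 (hinj hpC hcC h), fun h => hwnot.2.2.2 (hinj hpC hdC h)⟩
    have hgab : g a ≠ g b := fun h => hab (hinj haC hbC h)
    have hgcd : g c ≠ g d := fun h => hcd (hinj hcC hdC h)
    exact (wedgeM_eq_of hgab hgcd hgdist hgp1 hgp2 hgpnot).symm
  · -- no intersection point in N; show none in M either
    rw [hwa]
    by_cases h : ∃ q, g a ≠ g b ∧ g c ≠ g d ∧
        lineOf RM (g a) (g b) ≠ lineOf RM (g c) (g d) ∧
        q ∈ lineOf RM (g a) (g b) ∧ q ∈ lineOf RM (g c) (g d) ∧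
        q ∉ ({g a, g b, g c, g d} : Set ℕ)
    · exfalso
      have h2 := h
      obtain ⟨q₀, hgab, hgcd, hgdist, -, -, -⟩ := h2
      obtain ⟨hq1, hq2, hq3⟩ := wedgeM_spec h
      obtain ⟨x, hxC, hgx⟩ := hclose a haC b hbC c hcC d hdC
      rw [← hgx] at hq1 hq2 hq3
      have hab : a ≠ b := fun e => hgab (congrArg g e)
      have hcd : c ≠ d := fun e => hgcd (congrArg g e)
      have hx1 : x ∈ lineOf N.R a b := pull a haC b hbC x hxC hq1
      have hx2 : x ∈ lineOf N.R c d := pull c hcC d hdC x hxC hq2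
      have hxnot : x ∉ ({a, b, c, d} : Set W) := by
        simp only [Set.mem_insert_iff, Set.mem_singleton_iff, not_or]
        simp only [Set.mem_insert_iff, Set.mem_singleton_iff, not_or] at hq3
        exact ⟨fun h => hq3.1 (congrArg g h), fun h => hq3.2.1 (congrArg g h),
          fun h => hq3.2.2.1 (congrArg g h), fun h => hq3.2.2.2 (congrArg g h)⟩
      have hldist : lineOf N.R a b ≠ lineOf N.R c d := by
        intro heq
        exact hgdist ((lines_transfer N g hinj hrel haC hbC hcC hdC hab hcd).1 heq)
      exact hnone ⟨x, hab, hcd, hldist, hx1, hx2, hxnot⟩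
    · rw [wedgeM_eq_left h]

end Transfer
/-! ### Universality -/

section Universality
open Classical
variable {W : Type*} (N : WM W)

lemma cl_empty (P : PLS) : Cl P ∅ := by
  intro ℓ₁ h₁ ℓ₂ h₂ hne hM₁ hM₂ p hp₁ hp₂
  obtain ⟨x, y, -, -, hx, -⟩ := hM₁
  exact absurd hx (Finset.notMem_empty x)

lemma closedAt_empty : ClosedAt 0 ∅ := ⟨Finset.empty_subset _, cl_empty _⟩

open Classical in
/-- The `PLS` associated with a finite `WM`, along an injection `e`. -/
noncomputable def toPLS (hfin : N.carrier.Finite) (e : W → ℕ) : PLS where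
  pts := hfin.toFinset.image e
  lines := ((hfin.toFinset ×ˢ hfin.toFinset).filter
      (fun z => z.1 ≠ z.2 ∧ ∃ c, N.R z.1 z.2 c)).image
    (fun z => (hfin.toFinset.filter (fun x => x ∈ lineOf N.R z.1 z.2)).image e)

variable {N}
variable (hfin : N.carrier.Finite) (e : W → ℕ)

lemma toPLS_line_mem {z : W × W} (hz : z ∈ (hfin.toFinset ×ˢ hfin.toFinset).filter
      (fun w => w.1 ≠ w.2 ∧ ∃ c, N.R w.1 w.2 c)) :
    (hfin.toFinset.filter (fun x => x ∈ lineOf N.R z.1 z.2)).image e ∈ (toPLS N hfin e).lines := by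
  classical
  exact Finset.mem_image_of_mem _ hz

lemma toPLS_lines_spec {m : Finset ℕ} (hm : m ∈ (toPLS N hfin e).lines) :
    ∃ a b : W, a ∈ N.carrier ∧ b ∈ N.carrier ∧ a ≠ b ∧ (∃ c, N.R a b c) ∧
      m = (hfin.toFinset.filter (fun x => x ∈ lineOf N.R a b)).image e := by
  classical
  obtain ⟨⟨a, b⟩, hab, rfl⟩ := Finset.mem_image.1 hm
  simp only [Finset.mem_filter, Finset.mem_product, Set.Finite.mem_toFinset] at hab
  exact ⟨a, b, hab.1.1, hab.1.2, hab.2.1, hab.2.2, rfl⟩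

lemma toPLS_good (hinj : Set.InjOn e N.carrier) : Good (toPLS N hfin e) := by
  classical
  refine ⟨?_, ?_, ?_⟩
  · intro m hm
    obtain ⟨a, b, haC, hbC, hab, hex, rfl⟩ := toPLS_lines_spec hfin e hm
    exact Finset.image_subset_image (Finset.filter_subset _ _)
  · intro m hm
    obtain ⟨a, b, haC, hbC, hab, ⟨c, hc⟩, rfl⟩ := toPLS_lines_spec hfin e hm
    obtain ⟨hcab, hcac, hcbc⟩ := N.irrefl a b c hc
    obtain ⟨-, -, hcC⟩ := N.R_mem a b c hc
    have hmem : ∀ x, x ∈ N.carrier → x ∈ lineOf N.R a b →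
        e x ∈ (hfin.toFinset.filter (fun x => x ∈ lineOf N.R a b)).image e := by
      intro x hx hx'
      exact Finset.mem_image_of_mem e (Finset.mem_filter.2 ⟨hfin.mem_toFinset.2 hx, hx'⟩)
    refine ⟨e a, hmem a haC mem_lineOf_left, e b, hmem b hbC mem_lineOf_right,
      e c, hmem c hcC (mem_lineOf_of_rel hc), ?_, ?_, ?_⟩
    · exact fun h => hcab (hinj haC hbC h)
    · exact fun h => hcac (hinj haC hcC h)
    · exact fun h => hcbc (hinj hbC hcC h)
  · intro m₁ h₁ m₂ h₂ hne x y hx1 hx2 hy1 hy2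
    by_contra hxy
    apply hne
    obtain ⟨a, b, haC, hbC, hab, -, rfl⟩ := toPLS_lines_spec hfin e h₁
    obtain ⟨c, d, hcC, hdC, hcd, -, rfl⟩ := toPLS_lines_spec hfin e h₂
    -- pull back the two common points
    obtain ⟨x₁, hx₁, ex₁⟩ := Finset.mem_image.1 hx1
    obtain ⟨x₂, hx₂, ex₂⟩ := Finset.mem_image.1 hx2
    obtain ⟨y₁, hy₁, ey₁⟩ := Finset.mem_image.1 hy1
    obtain ⟨y₂, hy₂, ey₂⟩ := Finset.mem_image.1 hy2
    simp only [Finset.mem_filter, Set.Finite.mem_toFinset] at hx₁ hx₂ hy₁ hy₂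
    have e21 : x₂ = x₁ := hinj hx₂.1 hx₁.1 (by rw [ex₁, ex₂])
    have e43 : y₂ = y₁ := hinj hy₂.1 hy₁.1 (by rw [ey₁, ey₂])
    subst e21 e43
    have hxyW : x₂ ≠ y₂ := by
      intro h
      exact hxy (by rw [← ex₁, ← ey₁, h])
    have hEq : lineOf N.R a b = lineOf N.R c d :=
      (lineOf_eq_of_mem (WM.rax N) hab hxyW hx₁.2 hy₁.2).symm.trans
        (lineOf_eq_of_mem (WM.rax N) hcd hxyW hx₂.2 hy₂.2)
    exact congrArg (Finset.image e) (Finset.filter_congr (fun x _ => by rw [hEq]))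

lemma toPLS_rel (hinj : Set.InjOn e N.carrier) {x y z : W} (hx : x ∈ N.carrier) (hy : y ∈ N.carrier) (hz : z ∈ N.carrier) :
    Rel (toPLS N hfin e) (e x) (e y) (e z) ↔ N.R x y z := by
  classical
  constructor
  · rintro ⟨h1, h2, h3, m, hm, hxm, hym, hzm⟩
    obtain ⟨a, b, haC, hbC, hab, -, rfl⟩ := toPLS_lines_spec hfin e hm
    obtain ⟨x', hx', ex'⟩ := Finset.mem_image.1 hxm
    obtain ⟨y', hy', ey'⟩ := Finset.mem_image.1 hym
    obtain ⟨z', hz', ez'⟩ := Finset.mem_image.1 hzm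
    simp only [Finset.mem_filter, Set.Finite.mem_toFinset] at hx' hy' hz'
    have exx : x' = x := hinj hx'.1 hx ex'
    have eyy : y' = y := hinj hy'.1 hy ey'
    have ezz : z' = z := hinj hz'.1 hz ez'
    subst exx eyy ezz
    exact rel_of_mem_lineOf (WM.rax N) hab hx'.2 hy'.2 hz'.2
      (fun h => h1 (congrArg e h)) (fun h => h2 (congrArg e h)) (fun h => h3 (congrArg e h))
  · intro hR
    obtain ⟨hxy, hxz, hyz⟩ := N.irrefl x y z hR
    have hz' : z ∈ N.carrier := hz
    have hpair : (x, y) ∈ (hfin.toFinset ×ˢ hfin.toFinset).filter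
        (fun w => w.1 ≠ w.2 ∧ ∃ c, N.R w.1 w.2 c) := by
      simp only [Finset.mem_filter, Finset.mem_product, Set.Finite.mem_toFinset]
      exact ⟨⟨hx, hy⟩, hxy, z, hR⟩
    have hline := toPLS_line_mem hfin e hpair
    have hmem : ∀ w, w ∈ N.carrier → w ∈ lineOf N.R x y →
        e w ∈ (hfin.toFinset.filter (fun v => v ∈ lineOf N.R x y)).image e := by
      intro w hw hw'
      exact Finset.mem_image_of_mem e (Finset.mem_filter.2 ⟨hfin.mem_toFinset.2 hw, hw'⟩)
    exact ⟨fun h => hxy (hinj hx hy h), fun h => hxz (hinj hx hz h),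
      fun h => hyz (hinj hy hz h), _, hline, hmem x hx mem_lineOf_left,
      hmem y hy mem_lineOf_right, hmem z hz (mem_lineOf_of_rel hR)⟩

/-- Universality: every finite `WM` embeds into `Mstar`. -/
lemma universality (hfin : N.carrier.Finite) : ∃ f : W → ℕ, IsEmb N Mstar f := by
  classical
  -- choose an injection of the carrier into ℕ
  obtain ⟨e₀, he₀⟩ := Set.countable_iff_exists_injective.1 hfin.countable
  set e : W → ℕ := fun w => if h : w ∈ N.carrier then e₀ ⟨w, h⟩ else 0 with he
  have hinj : Set.InjOn e N.carrier := by
    intro x hx y hy hxy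
    simp only [he, dif_pos hx, dif_pos hy] at hxy
    exact Subtype.ext_iff.1 (he₀ hxy)
  set Q := toPLS N hfin e with hQ
  have hGood : Good Q := toPLS_good hfin e hinj
  obtain ⟨g, n, hg_inj, -, hg_rel, hg_pts, hg_closed⟩ :=
    rich closedAt_empty Q hGood (Finset.empty_subset _) (cl_empty Q)
      (fun x y z hx _ _ => absurd hx (Finset.notMem_empty x))
  have hmemQ : ∀ w ∈ N.carrier, e w ∈ Q.pts := by
    intro w hw
    exact Finset.mem_image_of_mem e (hfin.mem_toFinset.2 hw)
  set f : W → ℕ := fun w => g (e w) with hf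
  have hf_inj : Set.InjOn f N.carrier := by
    intro x hx y hy hxy
    exact hinj hx hy (hg_inj (hmemQ x hx) (hmemQ y hy) hxy)
  have hf_rel : ∀ a ∈ N.carrier, ∀ b ∈ N.carrier, ∀ c ∈ N.carrier,
      (N.R a b c ↔ RM (f a) (f b) (f c)) := by
    intro a ha b hb c hc
    rw [← toPLS_rel hfin e hinj ha hb hc]

    exact hg_rel (e a) (e b) (e c) (hmemQ a ha) (hmemQ b hb) (hmemQ c hc)
  have himg : ∀ x, x ∈ Q.pts.image g → x ∈ f '' N.carrier := by
    intro x hx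
    obtain ⟨x', hx', rfl⟩ := Finset.mem_image.1 hx
    obtain ⟨w, hw, rfl⟩ := Finset.mem_image.1 hx'
    exact ⟨w, hfin.mem_toFinset.1 hw, rfl⟩
  have hclose : ∀ a ∈ N.carrier, ∀ b ∈ N.carrier, ∀ c ∈ N.carrier, ∀ d ∈ N.carrier,
      wedgeM (f a) (f b) (f c) (f d) ∈ f '' N.carrier := by
    intro a ha b hb c hc d hd
    apply himg
    exact Finset.mem_image_of_mem g (hmemQ a ha) |> fun h =>
      closedAt_wedge_closed hg_closed
        (Finset.mem_image_of_mem g (hmemQ a ha)) (Finset.mem_image_of_mem g (hmemQ b hb))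
        (Finset.mem_image_of_mem g (hmemQ c hc)) (Finset.mem_image_of_mem g (hmemQ d hd))
  refine ⟨f, ?_, ?_, ?_, ?_⟩
  · exact fun x _ => trivial
  · exact fun x hx y hy h => hf_inj hx hy h
  · exact fun a ha b hb c hc => hf_rel a ha b hb c hc
  · intro a ha b hb c hc d hd
    exact wedge_transfer N f hf_inj hf_rel hclose ha hb hc hd

end Universality
/-! ### Partial isomorphisms and back-and-forth -/

/-- A finite wedge-closed set is closed at some stage. -/
lemma closed_of_wedge_closed {F : Finset ℕ}
    (hw : ∀ a ∈ F, ∀ b ∈ F, ∀ c ∈ F, ∀ d ∈ F, wedgeM a b c d ∈ F) :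
    ∃ m, ClosedAt m F := by
  classical
  refine ⟨F.sup id + 1, ?_, ?_⟩
  · intro x hx
    have hxle : x ≤ F.sup id := Finset.le_sup (f := id) hx
    exact chain_pts_mono (by omega : x + 1 ≤ F.sup id + 1) (mem_chain_pts x)
  · set m := F.sup id + 1 with hm
    intro ℓ₁ h₁ ℓ₂ h₂ hne hM₁ hM₂ p hp₁ hp₂
    obtain ⟨a, b, hab, ha₁, haF, hb₁, hbF⟩ := hM₁
    obtain ⟨c, d, hcd, hc₂, hcF, hd₂, hdF⟩ := hM₂
    by_cases hp : p = a ∨ p = b ∨ p = c ∨ p = d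
    · rcases hp with rfl | rfl | rfl | rfl
      exacts [haF, hbF, hcF, hdF]
    push_neg at hp
    obtain ⟨hpa, hpb, hpc, hpd⟩ := hp
    have hRab : RM a b p := RM_of_rel (n := m)
      ⟨hab, fun h => hpa h.symm, fun h => hpb h.symm, ℓ₁, h₁, ha₁, hb₁, hp₁⟩
    have hRcd : RM c d p := RM_of_rel (n := m)
      ⟨hcd, fun h => hpc h.symm, fun h => hpd h.symm, ℓ₂, h₂, hc₂, hd₂, hp₂⟩
    have hmema : ∀ w ∈ ℓ₁, w ∈ (chain m).pts := fun w hw => (chain_good m).1 ℓ₁ h₁ hw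
    have hmemc : ∀ w ∈ ℓ₂, w ∈ (chain m).pts := fun w hw => (chain_good m).1 ℓ₂ h₂ hw
    have hlines : lineOf RM a b ≠ lineOf RM c d := by
      intro hEq
      -- then c and d lie on ℓ₁, forcing ℓ₁ = ℓ₂
      have hmem : ∀ w ∈ ℓ₂, w ∈ ℓ₁ → True := fun _ _ _ => trivial
      have pullc : ∀ w, w ∈ (chain m).pts → w ∈ lineOf RM a b → w ∈ ℓ₁ := by
        intro w hwm hw
        rw [mem_lineOf_iff] at hw
        rcases hw with rfl | rfl | hw
        · exact ha₁
        · exact hb₁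
        · obtain ⟨-, -, -, ℓ', hℓ', ha', hb', hw'⟩ :=
            (RM_iff (hmema a ha₁) (hmema b hb₁) hwm).1 hw
          have : ℓ' = ℓ₁ := line_unique (chain_good m) hℓ' h₁ ⟨a, b, hab, ha', ha₁, hb', hb₁⟩
          exact this ▸ hw'
      have hcℓ₁ : c ∈ ℓ₁ := pullc c (hmemc c hc₂) (hEq ▸ mem_lineOf_left)
      have hdℓ₁ : d ∈ ℓ₁ := pullc d (hmemc d hd₂) (hEq ▸ mem_lineOf_right)
      exact hne (line_unique (chain_good m) h₁ h₂ ⟨c, d, hcd, hcℓ₁, hc₂, hdℓ₁, hd₂⟩)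
    have hpnot : p ∉ ({a, b, c, d} : Set ℕ) := by
      simp only [Set.mem_insert_iff, Set.mem_singleton_iff, not_or]
      exact ⟨hpa, hpb, hpc, hpd⟩
    have := wedgeM_eq_of hab hcd hlines (mem_lineOf_of_rel hRab) (mem_lineOf_of_rel hRcd) hpnot
    rw [← this]
    exact hw a haF b hbF c hcF d hdF

structure PI where
  s : Finset ℕ
  phi : ℕ → ℕ
  psi : ℕ → ℕ

def PGood (p : PI) : Prop :=
  (∀ x ∈ p.s, p.psi (p.phi x) = x) ∧
  (∀ x ∈ p.s, ∀ y ∈ p.s, ∀ z ∈ p.s, (RM x y z ↔ RM (p.phi x) (p.phi y) (p.phi z))) ∧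
  (∃ m, ClosedAt m p.s) ∧ (∃ m, ClosedAt m (p.s.image p.phi))

def PI.inv (p : PI) : PI := ⟨p.s.image p.phi, p.psi, p.phi⟩

lemma PI.image_inv {p : PI} (hp : ∀ x ∈ p.s, p.psi (p.phi x) = x) :
    (p.s.image p.phi).image p.psi = p.s := by
  classical
  ext x
  simp only [Finset.mem_image]
  constructor
  · rintro ⟨y, ⟨z, hz, rfl⟩, rfl⟩
    rw [hp z hz]
    exact hz
  · intro hx
    exact ⟨p.phi x, ⟨x, hx, rfl⟩, hp x hx⟩

lemma PGood.injOn {p : PI} (hp : PGood p) : Set.InjOn p.phi ↑p.s := by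
  intro x hx y hy hxy
  have := hp.1 x hx
  rw [hxy, hp.1 y hy] at this
  exact this.symm

lemma PGood.cod_inv {p : PI} (hp : PGood p) :
    ∀ z ∈ p.s.image p.phi, p.psi z ∈ p.s ∧ p.phi (p.psi z) = z := by
  intro z hz
  obtain ⟨x, hx, rfl⟩ := Finset.mem_image.1 hz
  rw [hp.1 x hx]
  exact ⟨hx, rfl⟩

lemma PGood.inv {p : PI} (hp : PGood p) : PGood p.inv := by
  obtain ⟨hinv, hrel, hdom, hcod⟩ := hp
  refine ⟨?_, ?_, ?_, ?_⟩
  · intro z hz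
    exact ((PGood.cod_inv ⟨hinv, hrel, hdom, hcod⟩) z hz).2
  · intro x hx y hy z hz
    obtain ⟨x', hx', rfl⟩ := Finset.mem_image.1 hx
    obtain ⟨y', hy', rfl⟩ := Finset.mem_image.1 hy
    obtain ⟨z', hz', rfl⟩ := Finset.mem_image.1 hz
    show RM _ _ _ ↔ RM (p.psi (p.phi x')) (p.psi (p.phi y')) (p.psi (p.phi z'))
    rw [hinv x' hx', hinv y' hy', hinv z' hz']
    exact (hrel x' hx' y' hy' z' hz').symm
  · exact hcod
  · show ∃ m, ClosedAt m ((p.s.image p.phi).image p.psi)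
    rw [PI.image_inv hinv]
    exact hdom

/-- The extension lemma: enlarge the domain of a partial isomorphism to cover `x`. -/
lemma PI_extend {p : PI} (hp : PGood p) (x : ℕ) :
    ∃ q : PI, PGood q ∧ p.s ⊆ q.s ∧ x ∈ q.s ∧
      (∀ y ∈ p.s, q.phi y = p.phi y) ∧ (∀ z ∈ p.s.image p.phi, q.psi z = p.psi z) := by
  classical
  obtain ⟨hinv, hrel, ⟨m₀, hm₀⟩, ⟨m₁, hm₁⟩⟩ := hp
  set m := max m₀ (x + 1) with hmdef
  have hsm : ClosedAt m p.s := closedAt_mono (le_max_left _ _) hm₀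
  have hxm : x ∈ (chain m).pts :=
    chain_pts_mono (le_max_right m₀ (x+1)) (mem_chain_pts x)
  set t := p.s.image p.phi with ht
  set h : ℕ → ℕ :=
    fun y => if y ∈ p.s then p.phi y else ((chain m).pts ∪ t).sup id + 1 + y with hh
  have hfix : ∀ y ∈ p.s, h y = p.phi y := fun y hy => by simp [hh, hy]
  have hbig : ∀ y, y ∉ p.s → h y = ((chain m).pts ∪ t).sup id + 1 + y :=
    fun y hy => by simp [hh, hy]
  have htb : ∀ z ∈ t, z ≤ ((chain m).pts ∪ t).sup id :=
    fun z hz => Finset.le_sup (f := id) (Finset.mem_union_right _ hz)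
  have hinj : Set.InjOn h ↑(chain m).pts := by
    intro u hu v hv huv
    by_cases hus : u ∈ p.s <;> by_cases hvs : v ∈ p.s
    · rw [hfix u hus, hfix v hvs] at huv
      exact (PGood.injOn ⟨hinv, hrel, ⟨m₀, hm₀⟩, ⟨m₁, hm₁⟩⟩) hus hvs huv
    · exfalso
      rw [hfix u hus, hbig v hvs] at huv
      have : p.phi u ∈ t := Finset.mem_image_of_mem _ hus
      have := htb _ this
      omega
    · exfalso
      rw [hbig u hus, hfix v hvs] at huv
      have : p.phi v ∈ t := Finset.mem_image_of_mem _ hvs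
      have := htb _ this
      omega
    · rw [hbig u hus, hbig v hvs] at huv
      omega
  set Q := mapP h (chain m) with hQ
  have hQgood : Good Q := mapP_good hinj (chain_good m)
  have hst : p.s ⊆ (chain m).pts := hsm.1
  have htQ : t ⊆ Q.pts := by
    intro z hz
    obtain ⟨y, hy, rfl⟩ := Finset.mem_image.1 hz
    have : h y = p.phi y := hfix y hy
    rw [← this]
    exact Finset.mem_image_of_mem h (hst hy)
  have htimg : p.s.image h = t := by
    apply Finset.image_congr
    intro y hy
    exact hfix y hy
  have hclQt : Cl Q t := by
    rw [← htimg]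
    exact mapP_cl hinj (chain_good m) hst hsm.2
  set m' := max m₁ m with hm'
  have htm' : ClosedAt m' t := closedAt_mono (le_max_left _ _) hm₁
  have hagree : ∀ u v w, u ∈ t → v ∈ t → w ∈ t →
      (Rel (chain m') u v w ↔ Rel Q u v w) := by
    intro u v w hu hv hw
    obtain ⟨u₀, hu₀, rfl⟩ := Finset.mem_image.1 hu
    obtain ⟨v₀, hv₀, rfl⟩ := Finset.mem_image.1 hv
    obtain ⟨w₀, hw₀, rfl⟩ := Finset.mem_image.1 hw
    have h1 : Rel (chain m') (p.phi u₀) (p.phi v₀) (p.phi w₀) ↔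
        RM (p.phi u₀) (p.phi v₀) (p.phi w₀) :=
      (RM_iff (htm'.1 (Finset.mem_image_of_mem _ hu₀)) (htm'.1 (Finset.mem_image_of_mem _ hv₀))
        (htm'.1 (Finset.mem_image_of_mem _ hw₀))).symm
    have h2 : RM (p.phi u₀) (p.phi v₀) (p.phi w₀) ↔ RM u₀ v₀ w₀ :=
      (hrel u₀ hu₀ v₀ hv₀ w₀ hw₀).symm
    have h3 : RM u₀ v₀ w₀ ↔ Rel (chain m) u₀ v₀ w₀ :=
      RM_iff (hst hu₀) (hst hv₀) (hst hw₀)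
    have h4 : Rel (chain m) u₀ v₀ w₀ ↔ Rel Q (h u₀) (h v₀) (h w₀) :=
      (mapP_rel hinj (chain_good m) (hst hu₀) (hst hv₀) (hst hw₀)).symm
    rw [h1, h2, h3, h4, hfix u₀ hu₀, hfix v₀ hv₀, hfix w₀ hw₀]
  obtain ⟨g, n, hg_inj, hg_fix, hg_rel, hg_pts, hg_closed⟩ :=
    rich htm' Q hQgood htQ hclQt hagree
  -- the new partial isomorphism
  have hmemQ : ∀ y ∈ (chain m).pts, h y ∈ Q.pts := fun y hy => Finset.mem_image_of_mem h hy
  have hgh_inj : Set.InjOn (fun y => g (h y)) ↑(chain m).pts := by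
    intro u hu v hv huv
    exact hinj hu hv (hg_inj (hmemQ u hu) (hmemQ v hv) huv)
  set φ : ℕ → ℕ := fun y => g (h y) with hφ
  set ψ : ℕ → ℕ := fun z => Function.invFunOn φ ↑(chain m).pts z with hψ
  have hψφ : ∀ y ∈ (chain m).pts, ψ (φ y) = y := by
    intro y hy
    have h1 : φ (Function.invFunOn φ ↑(chain m).pts (φ y)) = φ y :=
      Function.invFunOn_eq ⟨y, hy, rfl⟩
    have h2 : Function.invFunOn φ ↑(chain m).pts (φ y) ∈ ↑(chain m).pts :=
      Function.invFunOn_mem ⟨y, hy, rfl⟩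
    exact hgh_inj h2 hy h1
  have hφfix : ∀ y ∈ p.s, φ y = p.phi y := by
    intro y hy
    show g (h y) = p.phi y
    rw [hfix y hy]
    exact hg_fix (p.phi y) (Finset.mem_image_of_mem _ hy)
  refine ⟨⟨(chain m).pts, φ, ψ⟩, ⟨?_, ?_, ?_, ?_⟩, ?_, hxm, ?_, ?_⟩
  · exact hψφ
  · intro u hu v hv w hw
    calc RM u v w ↔ Rel (chain m) u v w := RM_iff hu hv hw
      _ ↔ Rel Q (h u) (h v) (h w) := (mapP_rel hinj (chain_good m) hu hv hw).symm
      _ ↔ RM (φ u) (φ v) (φ w) := hg_rel (h u) (h v) (h w) (hmemQ u hu) (hmemQ v hv) (hmemQ w hw)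
  · refine ⟨m, Finset.Subset.refl _, ?_⟩
    intro ℓ₁ h₁ ℓ₂ h₂ hne hM₁ hM₂ q hq₁ hq₂
    exact (chain_good m).1 ℓ₁ h₁ hq₁
  · refine ⟨n, ?_⟩
    have : (chain m).pts.image φ = Q.pts.image g := by
      show (chain m).pts.image (fun y => g (h y)) = ((chain m).pts.image h).image g
      rw [Finset.image_image]
      rfl
    rw [this]
    exact hg_closed
  · exact hst
  · exact hφfix
  · -- ψ agrees with p.psi on the old codomain
    intro z hz
    obtain ⟨z₀, hz₀, rfl⟩ := Finset.mem_image.1 hz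
    have h1 : φ z₀ = p.phi z₀ := hφfix z₀ hz₀
    have h2 : ψ (p.phi z₀) = z₀ := by
      rw [← h1]
      exact hψφ z₀ (hst hz₀)
    show ψ (p.phi z₀) = p.psi (p.phi z₀)
    rw [h2, hinv z₀ hz₀]
/-! ### Back-and-forth -/

open Classical in
noncomputable def pstep (p : PI) (n : ℕ) : PI :=
  if hp : PGood p then
    if hq1 : PGood (Classical.choose (PI_extend hp n)).inv then
      (Classical.choose (PI_extend hq1 n)).inv
    else p
  else p

lemma twostep {n : ℕ} {p q1 q2 : PI} (hp : PGood p) (hq1good : PGood q1)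
    (hss1 : p.s ⊆ q1.s) (hn1 : n ∈ q1.s) (hphi1 : ∀ y ∈ p.s, q1.phi y = p.phi y)
    (hq2good : PGood q2) (hss2 : q1.inv.s ⊆ q2.s) (hn2 : n ∈ q2.s)
    (hphi2 : ∀ y ∈ q1.inv.s, q2.phi y = q1.inv.phi y)
    (hpsi2 : ∀ z ∈ q1.inv.s.image q1.inv.phi, q2.psi z = q1.inv.psi z) :
    PGood q2.inv ∧ p.s ⊆ q2.inv.s ∧ n ∈ q2.inv.s ∧
    p.s.image p.phi ⊆ q2.inv.s.image q2.inv.phi ∧ n ∈ q2.inv.s.image q2.inv.phi ∧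
    (∀ y ∈ p.s, q2.inv.phi y = p.phi y) ∧
    (∀ z ∈ p.s.image p.phi, q2.inv.psi z = p.psi z) := by
  classical
  have hr1s : q1.inv.s = q1.s.image q1.phi := rfl
  have hr1img : q1.inv.s.image q1.inv.phi = q1.s := PI.image_inv hq1good.1
  have hkey1 : ∀ y ∈ q1.s, q2.phi (q1.phi y) = y := by
    intro y hy
    have hmem : q1.phi y ∈ q1.inv.s := Finset.mem_image_of_mem _ hy
    rw [hphi2 _ hmem]
    exact hq1good.1 y hy
  have hdom : q1.s ⊆ q2.inv.s := by
    intro y hy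
    exact Finset.mem_image.2 ⟨q1.phi y, hss2 (Finset.mem_image_of_mem _ hy), hkey1 y hy⟩
  have hcodeq : q2.inv.s.image q2.inv.phi = q2.s := PI.image_inv hq2good.1
  refine ⟨hq2good.inv, hss1.trans hdom, hdom hn1, ?_, ?_, ?_, ?_⟩
  · rw [hcodeq]
    intro z hz
    obtain ⟨y, hy, rfl⟩ := Finset.mem_image.1 hz
    rw [← hphi1 y hy]
    exact hss2 (Finset.mem_image_of_mem _ (hss1 hy))
  · rw [hcodeq]
    exact hn2
  · intro y hy
    show q2.psi y = p.phi y
    have hy1 : y ∈ q1.s := hss1 hy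
    have hmem : y ∈ q1.inv.s.image q1.inv.phi := by rw [hr1img]; exact hy1
    rw [hpsi2 _ hmem]
    show q1.phi y = p.phi y
    exact hphi1 y hy
  · intro z hz
    show q2.phi z = p.psi z
    obtain ⟨y, hy, rfl⟩ := Finset.mem_image.1 hz
    have hz1 : p.phi y ∈ q1.inv.s := by
      rw [hr1s, ← hphi1 y hy]
      exact Finset.mem_image_of_mem _ (hss1 hy)
    rw [hphi2 _ hz1]
    show q1.psi (p.phi y) = p.psi (p.phi y)
    rw [hp.1 y hy, ← hphi1 y hy]
    exact hq1good.1 y (hss1 hy)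

lemma pstep_spec {p : PI} {n : ℕ} (hp : PGood p) :
    PGood (pstep p n) ∧ p.s ⊆ (pstep p n).s ∧ n ∈ (pstep p n).s ∧
    p.s.image p.phi ⊆ (pstep p n).s.image (pstep p n).phi ∧
    n ∈ (pstep p n).s.image (pstep p n).phi ∧
    (∀ y ∈ p.s, (pstep p n).phi y = p.phi y) ∧
    (∀ z ∈ p.s.image p.phi, (pstep p n).psi z = p.psi z) := by
  classical
  obtain ⟨hq1good, hss1, hn1, hphi1, hpsi1⟩ := Classical.choose_spec (PI_extend hp n)
  have hq1invg : PGood (Classical.choose (PI_extend hp n)).inv := hq1good.inv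
  obtain ⟨hq2good, hss2, hn2, hphi2, hpsi2⟩ := Classical.choose_spec (PI_extend hq1invg n)
  have hres : pstep p n = (Classical.choose (PI_extend hq1invg n)).inv := by
    rw [pstep, dif_pos hp, dif_pos hq1invg]
  rw [hres]
  exact twostep hp hq1good hss1 hn1 hphi1 hq2good hss2 hn2 hphi2 hpsi2

noncomputable def bnf (p₀ : PI) : ℕ → PI
  | 0 => p₀
  | n + 1 => pstep (bnf p₀ n) n

section BNF
variable {p₀ : PI} (hp₀ : PGood p₀)
include hp₀

lemma bnf_good (n : ℕ) : PGood (bnf p₀ n) := by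
  induction n with
  | zero => exact hp₀
  | succ n ih => exact (pstep_spec ih).1

lemma bnf_dom_mono {k n : ℕ} (h : k ≤ n) : (bnf p₀ k).s ⊆ (bnf p₀ n).s := by
  induction n with
  | zero => rw [Nat.le_zero.1 h]
  | succ n ih =>
    rcases Nat.lt_or_ge k (n+1) with h' | h'
    · exact (ih (Nat.lt_succ_iff.1 h')).trans (pstep_spec (bnf_good hp₀ n)).2.1
    · rw [le_antisymm h h']

lemma bnf_cod_mono {k n : ℕ} (h : k ≤ n) :
    (bnf p₀ k).s.image (bnf p₀ k).phi ⊆ (bnf p₀ n).s.image (bnf p₀ n).phi := by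
  induction n with
  | zero => rw [Nat.le_zero.1 h]
  | succ n ih =>
    rcases Nat.lt_or_ge k (n+1) with h' | h'
    · exact (ih (Nat.lt_succ_iff.1 h')).trans (pstep_spec (bnf_good hp₀ n)).2.2.2.1
    · rw [le_antisymm h h']

lemma bnf_phi_stable {k n : ℕ} (h : k ≤ n) :
    ∀ y ∈ (bnf p₀ k).s, (bnf p₀ n).phi y = (bnf p₀ k).phi y := by
  induction n with
  | zero => rw [Nat.le_zero.1 h]; exact fun y _ => rfl
  | succ n ih =>
    rcases Nat.lt_or_ge k (n+1) with h' | h'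
    · intro y hy
      have h'' := Nat.lt_succ_iff.1 h'
      show (pstep (bnf p₀ n) n).phi y = _
      rw [(pstep_spec (bnf_good hp₀ n)).2.2.2.2.2.1 y (bnf_dom_mono hp₀ h'' hy)]
      exact ih h'' y hy
    · rw [le_antisymm h h']; exact fun y _ => rfl

lemma bnf_psi_stable {k n : ℕ} (h : k ≤ n) :
    ∀ z ∈ (bnf p₀ k).s.image (bnf p₀ k).phi, (bnf p₀ n).psi z = (bnf p₀ k).psi z := by
  induction n with
  | zero => rw [Nat.le_zero.1 h]; exact fun y _ => rfl
  | succ n ih =>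
    rcases Nat.lt_or_ge k (n+1) with h' | h'
    · intro z hz
      have h'' := Nat.lt_succ_iff.1 h'
      show (pstep (bnf p₀ n) n).psi z = _
      rw [(pstep_spec (bnf_good hp₀ n)).2.2.2.2.2.2 z (bnf_cod_mono hp₀ h'' hz)]
      exact ih h'' z hz
    · rw [le_antisymm h h']; exact fun y _ => rfl

lemma bnf_mem_dom (n : ℕ) : n ∈ (bnf p₀ (n+1)).s :=
  (pstep_spec (bnf_good hp₀ n)).2.2.1

lemma bnf_mem_cod (n : ℕ) : n ∈ (bnf p₀ (n+1)).s.image (bnf p₀ (n+1)).phi :=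
  (pstep_spec (bnf_good hp₀ n)).2.2.2.2.1

/-- The limit map. -/
noncomputable def bnfG : ℕ → ℕ := fun y => (bnf p₀ (y+1)).phi y

noncomputable def bnfGinv : ℕ → ℕ := fun z => (bnf p₀ (z+1)).psi z

omit hp₀ in
lemma bnfG_def (y : ℕ) : bnfG (p₀ := p₀) y = (bnf p₀ (y+1)).phi y := rfl

lemma bnfG_value {n y : ℕ} (hy : y ∈ (bnf p₀ n).s) : bnfG (p₀ := p₀) y = (bnf p₀ n).phi y := by
  rcases le_total n (y+1) with h | h
  · exact bnf_phi_stable hp₀ h y hy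
  · exact (bnf_phi_stable hp₀ h y (bnf_mem_dom hp₀ y)).symm

lemma bnfGinv_value {n z : ℕ} (hz : z ∈ (bnf p₀ n).s.image (bnf p₀ n).phi) :
    bnfGinv (p₀ := p₀) z = (bnf p₀ n).psi z := by
  rcases le_total n (z+1) with h | h
  · exact bnf_psi_stable hp₀ h z hz
  · exact (bnf_psi_stable hp₀ h z (bnf_mem_cod hp₀ z)).symm

lemma bnfG_left_inverse : ∀ y, bnfGinv (p₀ := p₀) (bnfG (p₀ := p₀) y) = y := by
  intro y
  set z := bnfG (p₀ := p₀) y with hz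
  set N := max (y+1) (z+1) with hN
  have hyN : y ∈ (bnf p₀ N).s := bnf_dom_mono hp₀ (le_max_left _ _) (bnf_mem_dom hp₀ y)
  have hphiN : (bnf p₀ N).phi y = z := (bnfG_value hp₀ hyN).symm
  have hzN : z ∈ (bnf p₀ N).s.image (bnf p₀ N).phi := by
    rw [← hphiN]
    exact Finset.mem_image_of_mem _ hyN
  rw [bnfGinv_value hp₀ hzN, ← hphiN, (bnf_good hp₀ N).1 y hyN]

lemma bnfG_right_inverse : ∀ z, bnfG (p₀ := p₀) (bnfGinv (p₀ := p₀) z) = z := by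
  intro z
  have hz : z ∈ (bnf p₀ (z+1)).s.image (bnf p₀ (z+1)).phi := bnf_mem_cod hp₀ z
  obtain ⟨hw, hphiw⟩ := (bnf_good hp₀ (z+1)).cod_inv z hz
  rw [bnfGinv_value hp₀ hz, bnfG_value hp₀ hw, hphiw]

lemma bnfG_bijective : Function.Bijective (bnfG (p₀ := p₀)) :=
  ⟨Function.LeftInverse.injective (bnfG_left_inverse hp₀),
    Function.RightInverse.surjective (bnfG_right_inverse hp₀)⟩

lemma bnfG_rel (a b c : ℕ) :
    RM a b c ↔ RM (bnfG (p₀ := p₀) a) (bnfG (p₀ := p₀) b) (bnfG (p₀ := p₀) c) := by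
  set N := max (max a b) c + 1 with hN
  have ha : a ∈ (bnf p₀ N).s :=
    bnf_dom_mono hp₀ (by omega : a + 1 ≤ N) (bnf_mem_dom hp₀ a)
  have hb : b ∈ (bnf p₀ N).s :=
    bnf_dom_mono hp₀ (by omega : b + 1 ≤ N) (bnf_mem_dom hp₀ b)
  have hc : c ∈ (bnf p₀ N).s :=
    bnf_dom_mono hp₀ (by omega : c + 1 ≤ N) (bnf_mem_dom hp₀ c)
  rw [bnfG_value hp₀ ha, bnfG_value hp₀ hb, bnfG_value hp₀ hc]
  exact (bnf_good hp₀ N).2.1 a ha b hb c hc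

lemma bnfG_aut : IsAut Mstar (bnfG (p₀ := p₀)) := by
  refine ⟨?_, ?_, ?_⟩
  · show Set.BijOn _ Set.univ Set.univ
    exact Function.Bijective.bijOn_univ (bnfG_bijective hp₀)
  · intro a _ b _ c _
    exact bnfG_rel hp₀ a b c
  · intro a _ b _ c _ d _
    have := wedge_transfer Mstar (bnfG (p₀ := p₀)) (fun x _ y _ h => (bnfG_bijective hp₀).1 h)
      (fun x _ y _ z _ => bnfG_rel hp₀ x y z)
      (fun x _ y _ z _ w _ => by
        obtain ⟨u, hu⟩ := (bnfG_bijective hp₀).2 (wedgeM (bnfG (p₀ := p₀) x)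
          (bnfG (p₀ := p₀) y) (bnfG (p₀ := p₀) z) (bnfG (p₀ := p₀) w))
        exact ⟨u, trivial, hu⟩)
      (Set.mem_univ a) (Set.mem_univ b) (Set.mem_univ c) (Set.mem_univ d)
    exact this

lemma bnfG_extends : ∀ y ∈ p₀.s, bnfG (p₀ := p₀) y = p₀.phi y := by
  intro y hy
  exact bnfG_value hp₀ (n := 0) hy

end BNF
/-! ### Homogeneity and the main theorem -/

lemma homog (A B : WM ℕ) (hsA : Sub A Mstar) (hsB : Sub B Mstar)
    (hfA : A.carrier.Finite) (hfB : B.carrier.Finite) (f : ℕ → ℕ) (hiso : IsIso A B f) :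
    ∃ g : ℕ → ℕ, IsAut Mstar g ∧ ∀ x ∈ A.carrier, g x = f x := by
  classical
  obtain ⟨hemb, hsurj⟩ := hiso
  have hinj_f : Set.InjOn f A.carrier := fun x hx y hy h => hemb.inj x hx y hy h
  set p₀ : PI := ⟨hfA.toFinset, f, Function.invFunOn f A.carrier⟩ with hp₀def
  have hmemA : ∀ x, x ∈ p₀.s ↔ x ∈ A.carrier := fun x => hfA.mem_toFinset
  have hp₀ : PGood p₀ := by
    refine ⟨?_, ?_, ?_, ?_⟩
    · intro x hx
      have hxC : x ∈ A.carrier := (hmemA x).1 hx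
      have h1 : f (Function.invFunOn f A.carrier (f x)) = f x :=
        Function.invFunOn_eq ⟨x, hxC, rfl⟩
      have h2 : Function.invFunOn f A.carrier (f x) ∈ A.carrier :=
        Function.invFunOn_mem ⟨x, hxC, rfl⟩
      exact hinj_f h2 hxC h1
    · intro x hx y hy z hz
      have hxC := (hmemA x).1 hx
      have hyC := (hmemA y).1 hy
      have hzC := (hmemA z).1 hz
      show RM x y z ↔ RM (f x) (f y) (f z)
      calc RM x y z ↔ A.R x y z := (hsA.rel x hxC y hyC z hzC).symm
        _ ↔ B.R (f x) (f y) (f z) := hemb.rel x hxC y hyC z hzC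
        _ ↔ RM (f x) (f y) (f z) :=
            hsB.rel (f x) (hemb.maps x hxC) (f y) (hemb.maps y hyC) (f z) (hemb.maps z hzC)
    · apply closed_of_wedge_closed
      intro a ha b hb c hc d hd
      have haC := (hmemA a).1 ha
      have hbC := (hmemA b).1 hb
      have hcC := (hmemA c).1 hc
      have hdC := (hmemA d).1 hd
      have h1 : wedgeM a b c d = A.wedge a b c d :=
        (hsA.wedge a haC b hbC c hcC d hdC).symm
      rw [hmemA, h1]
      exact A.wedge_mem a b c d haC hbC hcC hdC
    · have himg : p₀.s.image p₀.phi = hfB.toFinset := by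
        ext z
        simp only [Finset.mem_image]
        constructor
        · rintro ⟨x, hx, rfl⟩
          exact hfB.mem_toFinset.2 (hemb.maps x ((hmemA x).1 hx))
        · intro hz
          obtain ⟨x, hx, rfl⟩ := hsurj (hfB.mem_toFinset.1 hz)
          exact ⟨x, (hmemA x).2 hx, rfl⟩
      rw [himg]
      apply closed_of_wedge_closed
      intro a ha b hb c hc d hd
      have haC := hfB.mem_toFinset.1 ha
      have hbC := hfB.mem_toFinset.1 hb
      have hcC := hfB.mem_toFinset.1 hc
      have hdC := hfB.mem_toFinset.1 hd
      have h1 : wedgeM a b c d = B.wedge a b c d :=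
        (hsB.wedge a haC b hbC c hcC d hdC).symm
      rw [hfB.mem_toFinset, h1]
      exact B.wedge_mem a b c d haC hbC hcC hdC
  refine ⟨bnfG (p₀ := p₀), bnfG_aut hp₀, ?_⟩
  intro x hx
  exact bnfG_extends hp₀ x ((hmemA x).2 hx)
/-- there is a countably infinite simple ∧-matroid of rank 3 which embeds
every finite simple ∧-matroid of rank ≤ 3 and in which every isomorphism between finite
substructures extends to an automorphism. -/
theorem universal_homogeneous_exists :
    ∃ (V : Type) (M : WM V), Countable V ∧ Infinite V ∧ M.carrier = Set.univ ∧
      Rank3 M ∧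
      (∀ (W : Type) (N : WM W), N.carrier.Finite → ∃ f : W → V, IsEmb N M f) ∧
      (∀ A B : WM V, Sub A M → Sub B M → A.carrier.Finite → B.carrier.Finite →
        ∀ f : V → V, IsIso A B f →
          ∃ g : V → V, IsAut M g ∧ ∀ x ∈ A.carrier, g x = f x) := by
  refine ⟨ℕ, Mstar, inferInstance, inferInstance, rfl, ?_, ?_, ?_⟩
  · exact ⟨0, trivial, 1, trivial, 2, trivial, by norm_num, by norm_num, by norm_num,
      not_RM_012⟩
  · intro W N hfin
    exact universality hfin
  · intro A B hsA hsB hfA hfB f hiso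
    exact homog A B hsA hsB hfA hfB f hiso

end PaoliniMatroids
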